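/- arXiv:1610.02710 — 2 statements merged into one kernel-verified Lean document; each statement's English description precedes it below -/
import Mathlib

section
/- Compactness Theorem: for any set Γ∪{φ} of MD∨-formulas, if Γ⊨φ then there exists a finite set Δ⊆Γ such that Δ⊨φ. -/
/-- Classical formulas of MD∨: α ::= p | ⊥ | ¬α | α∧α | α⊗α | □α | ◇α. -/
inductive CForm : Type where
  | var : ℕ → CForm
  | bot : CForm
  | neg : CForm → CForm
  | and : CForm → CForm → CForm
  | tensor : CForm → CForm → CForm
  | box : CForm → CForm
  | dia : CForm → CForm

/-- Formulas of MD∨ (modal dependence logic with intuitionistic disjunction):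
φ ::= α | =(α₁,…,αₙ,β) | φ∧φ | φ⊗φ | φ∨φ | □φ | ◇φ, with α,αᵢ,β classical.
Classical formulas are embedded structurally; the primitive (classical) negation
is represented by the constructor `cneg`. -/
inductive MDVForm : Type where
  | var : ℕ → MDVForm
  | bot : MDVForm
  | cneg : CForm → MDVForm
  | dep : List CForm → CForm → MDVForm
  | and : MDVForm → MDVForm → MDVForm
  | tensor : MDVForm → MDVForm → MDVForm
  | or : MDVForm → MDVForm → MDVForm
  | box : MDVForm → MDVForm
  | dia : MDVForm → MDVForm

/-- The structural embedding of classical formulas into MD∨ formulas. -/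
def CForm.toMDV : CForm → MDVForm
  | .var p => .var p
  | .bot => .bot
  | .neg α => .cneg α
  | .and α β => .and α.toMDV β.toMDV
  | .tensor α β => .tensor α.toMDV β.toMDV
  | .box α => .box α.toMDV
  | .dia α => .dia α.toMDV

/-- A (classical modal) Kripke model M = (W,R,V) with W nonempty. -/
structure KModel where
  W : Type
  ne : Nonempty W
  R : W → W → Prop
  V : ℕ → Set W

/-- R(X) = {w : ∃ v ∈ X, vRw}. -/
def KModel.img (M : KModel) (X : Set M.W) : Set M.W := {w | ∃ v ∈ X, M.R v w}

/-- Y is a successor team of X: Y ⊆ R(X) and Y ∩ R(w) ≠ ∅ for every w ∈ X. -/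
def KModel.succT (M : KModel) (X Y : Set M.W) : Prop :=
  Y ⊆ M.img X ∧ ∀ w ∈ X, ∃ u ∈ Y, M.R w u

/-- Team semantics for classical formulas. -/
def KModel.csat (M : KModel) : Set M.W → CForm → Prop
  | X, .var p => X ⊆ M.V p
  | X, .bot => X = ∅
  | X, .neg α => ∀ w ∈ X, ¬ M.csat {w} α
  | X, .and α β => M.csat X α ∧ M.csat X β
  | X, .tensor α β => ∃ Y Z, X = Y ∪ Z ∧ M.csat Y α ∧ M.csat Z β
  | X, .box α => M.csat (M.img X) α
  | X, .dia α => ∃ Y, M.succT X Y ∧ M.csat Y α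

/-- Team semantics for MD∨ formulas. -/
def KModel.sat (M : KModel) : Set M.W → MDVForm → Prop
  | X, .var p => X ⊆ M.V p
  | X, .bot => X = ∅
  | X, .cneg α => ∀ w ∈ X, ¬ M.csat {w} α
  | X, .dep αs β => ∀ w ∈ X, ∀ u ∈ X,
      (∀ α ∈ αs, (M.csat {w} α ↔ M.csat {u} α)) → (M.csat {w} β ↔ M.csat {u} β)
  | X, .and φ ψ => M.sat X φ ∧ M.sat X ψ
  | X, .tensor φ ψ => ∃ Y Z, X = Y ∪ Z ∧ M.sat Y φ ∧ M.sat Z ψ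
  | X, .or φ ψ => M.sat X φ ∨ M.sat X ψ
  | X, .box φ => M.sat (M.img X) φ
  | X, .dia φ => ∃ Y, M.succT X Y ∧ M.sat Y φ

/-- Γ⊨φ : semantic entailment from a set of premises. -/
def SetEntails (Γ : Set MDVForm) (φ : MDVForm) : Prop :=
  ∀ (M : KModel) (X : Set M.W), (∀ γ ∈ Γ, M.sat X γ) → M.sat X φ

/-- φ⊨ψ : semantic entailment. -/
def MDVEntails (φ ψ : MDVForm) : Prop :=
  ∀ (M : KModel) (X : Set M.W), M.sat X φ → M.sat X ψ

namespace MDVCompact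
open Set


/-- Standard pointwise Kripke semantics for classical formulas. -/
def psat (M : KModel) : M.W → CForm → Prop
  | w, .var p => w ∈ M.V p
  | _, .bot => False
  | w, .neg α => ¬ psat M w α
  | w, .and α β => psat M w α ∧ psat M w β
  | w, .tensor α β => psat M w α ∨ psat M w β
  | w, .box α => ∀ u, M.R w u → psat M u α
  | w, .dia α => ∃ u, M.R w u ∧ psat M u α

/-- Flatness of classical formulas. -/
theorem csat_iff (M : KModel) (α : CForm) : ∀ X : Set M.W,
    M.csat X α ↔ ∀ w ∈ X, psat M w α := by
  induction α with
  | var p => intro X; simp [KModel.csat, psat, Set.subset_def]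
  | bot => intro X; simp [KModel.csat, psat, Set.eq_empty_iff_forall_notMem]
  | neg α ih => intro X
                simp only [KModel.csat, psat]
                constructor
                · intro h w hw; exact fun hp => h w hw (((ih {w}).2 (by simpa using hp)))
                · intro h w hw hc; exact h w hw ((ih {w}).1 hc w rfl)
  | and α β ihα ihβ => intro X; simp only [KModel.csat, psat, ihα, ihβ]; aesop
  | tensor α β ihα ihβ =>
      intro X
      simp only [KModel.csat, psat]
      constructor
      · rintro ⟨Y, Z, rfl, hY, hZ⟩ w hw
        rcases hw with hw | hw
        · exact Or.inl ((ihα Y).1 hY w hw)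
        · exact Or.inr ((ihβ Z).1 hZ w hw)
      · intro h
        refine ⟨{w ∈ X | psat M w α}, {w ∈ X | ¬ psat M w α}, ?_, ?_, ?_⟩
        · ext w; by_cases hp : psat M w α <;> simp [hp]
        · exact (ihα _).2 (fun w hw => hw.2)
        · refine (ihβ _).2 (fun w hw => ?_)
          rcases h w hw.1 with h' | h'
          · exact absurd h' hw.2
          · exact h'
  | box α ih =>
      intro X
      simp only [KModel.csat, psat, ih]
      constructor
      · intro h w hw u hu; exact h u ⟨w, hw, hu⟩
      · rintro h u ⟨w, hw, hu⟩; exact h w hw u hu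
  | dia α ih =>
      intro X
      simp only [KModel.csat, psat]
      constructor
      · rintro ⟨Y, ⟨hYsub, hYsucc⟩, hY⟩ w hw
        obtain ⟨u, hu, hru⟩ := hYsucc w hw
        exact ⟨u, hru, (ih Y).1 hY u hu⟩
      · intro h
        refine ⟨{u | (∃ w ∈ X, M.R w u) ∧ psat M u α}, ⟨?_, ?_⟩, ?_⟩
        · intro u hu; exact hu.1
        · intro w hw
          obtain ⟨u, hru, hp⟩ := h w hw
          exact ⟨u, ⟨⟨w, hw, hru⟩, hp⟩, hru⟩
        · exact (ih _).2 (fun u hu => hu.2)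


/-- Disjunction on points is tensor. -/
def cOr (α β : CForm) : CForm := CForm.tensor α β

def cTop : CForm := CForm.neg CForm.bot

def cImp (α β : CForm) : CForm := cOr (CForm.neg α) β

def cIff (α β : CForm) : CForm := CForm.and (cImp α β) (cImp β α)

def conjList : List CForm → CForm
  | [] => cTop
  | a :: l => CForm.and a (conjList l)

@[simp] theorem psat_cOr (M : KModel) (w : M.W) (α β : CForm) :
    psat M w (cOr α β) ↔ psat M w α ∨ psat M w β := Iff.rfl

@[simp] theorem psat_cTop (M : KModel) (w : M.W) : psat M w cTop := by
  simp [cTop, psat]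

@[simp] theorem psat_cImp (M : KModel) (w : M.W) (α β : CForm) :
    psat M w (cImp α β) ↔ (psat M w α → psat M w β) := by
  simp [cImp, psat]; tauto

@[simp] theorem psat_cIff (M : KModel) (w : M.W) (α β : CForm) :
    psat M w (cIff α β) ↔ (psat M w α ↔ psat M w β) := by
  simp [cIff, psat]; tauto

@[simp] theorem psat_conjList (M : KModel) (w : M.W) (l : List CForm) :
    psat M w (conjList l) ↔ ∀ a ∈ l, psat M w a := by
  induction l with
  | nil => simp [conjList]
  | cons a l ih => simp [conjList, psat, ih]

/-- Encode a boolean as a classical formula. -/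
def ofBool : Bool → CForm
  | true => cTop
  | false => CForm.bot

@[simp] theorem psat_ofBool (M : KModel) (w : M.W) (b : Bool) :
    psat M w (ofBool b) ↔ b = true := by
  cases b <;> simp [ofBool, psat]

/-- Literal pattern: α or ¬α depending on a boolean. -/
def lit (α : CForm) : Bool → CForm
  | true => α
  | false => CForm.neg α

@[simp] theorem psat_lit (M : KModel) (w : M.W) (α : CForm) (b : Bool) :
    psat M w (lit α b) ↔ (psat M w α ↔ b = true) := by
  cases b <;> simp [lit, psat]

open Classical in
/-- The boolean value profile of a world on a list of classical formulas. -/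
noncomputable def valsb (M : KModel) (αs : List CForm) (w : M.W) : Fin αs.length → Bool :=
  fun i => decide (psat M w (αs.get i))

/-- The classical formula describing that β's value is F applied to the value profile. -/
noncomputable def depForm (αs : List CForm) (β : CForm)
    (F : (Fin αs.length → Bool) → Bool) : CForm :=
  conjList (((Finset.univ : Finset (Fin αs.length → Bool)).toList).map
    (fun s => cImp (conjList ((List.finRange αs.length).map (fun i => lit (αs.get i) (s i))))
      (cIff β (ofBool (F s)))))

theorem psat_depForm (M : KModel) (αs : List CForm) (β : CForm)
    (F : (Fin αs.length → Bool) → Bool) (w : M.W) :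
    psat M w (depForm αs β F) ↔ (psat M w β ↔ F (valsb M αs w) = true) := by
  classical
  simp only [depForm, psat_conjList, List.mem_map, Finset.mem_toList, Finset.mem_univ,
    true_and, forall_exists_index, forall_apply_eq_imp_iff, psat_cImp, psat_cIff,
    psat_ofBool, List.mem_map, List.mem_finRange]
  constructor
  · intro h
    have := h (valsb M αs w) ?_
    · exact this
    · intro i
      rw [psat_lit]
      simp [valsb]
  · intro h s hs
    have hsv : s = valsb M αs w := by
      funext i
      have := hs i
      rw [psat_lit] at this
      simp only [valsb]
      rcases Bool.eq_false_or_eq_true (s i) with h' | h' <;>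
        simp_all
    rw [hsv]; exact h

theorem dep_iff (M : KModel) (αs : List CForm) (β : CForm) (X : Set M.W) :
    M.sat X (.dep αs β) ↔
      ∃ F : (Fin αs.length → Bool) → Bool,
        ∀ w ∈ X, (psat M w β ↔ F (valsb M αs w) = true) := by
  classical
  have hsing : ∀ (w : M.W) (γ : CForm), M.csat {w} γ ↔ psat M w γ := by
    intro w γ; rw [csat_iff]; simp
  constructor
  · intro h
    refine ⟨fun s => decide (∃ w ∈ X, valsb M αs w = s ∧ psat M w β), ?_⟩
    intro w hw
    constructor
    · intro hb
      simp only [decide_eq_true_eq]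
      exact ⟨w, hw, rfl, hb⟩
    · intro hF
      simp only [decide_eq_true_eq] at hF
      obtain ⟨u, hu, hval, hb⟩ := hF
      have := h u hu w hw ?_
      · exact (hsing w β).1 (this.1 ((hsing u β).2 hb))
      · intro γ hγ
        rw [hsing, hsing]
        obtain ⟨i, rfl⟩ := List.mem_iff_get.1 hγ
        have := congrFun hval i
        simp only [valsb, decide_eq_decide] at this
        exact this
  · rintro ⟨F, hF⟩
    intro w hw u hu hag
    have hval : valsb M αs w = valsb M αs u := by
      funext i
      have := hag (αs.get i) (List.get_mem αs i)
      rw [hsing, hsing] at this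
      simp only [valsb, decide_eq_decide]
      exact this
    rw [hsing, hsing, hF w hw, hF u hu, hval]
/-- Normal form: a finite list of classical disjuncts for each MD∨ formula. -/
noncomputable def NF : MDVForm → List CForm
  | .var p => [.var p]
  | .bot => [.bot]
  | .cneg α => [.neg α]
  | .dep αs β =>
      ((Finset.univ : Finset ((Fin αs.length → Bool) → Bool)).toList).map (depForm αs β)
  | .and φ ψ => (NF φ).flatMap (fun a => (NF ψ).map (CForm.and a))
  | .tensor φ ψ => (NF φ).flatMap (fun a => (NF ψ).map (CForm.tensor a))
  | .or φ ψ => NF φ ++ NF ψ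
  | .box φ => (NF φ).map CForm.box
  | .dia φ => (NF φ).map CForm.dia

/-- Normal form theorem: M,X ⊨ φ iff some disjunct is satisfied pointwise. -/
theorem sat_iff_NF (M : KModel) (φ : MDVForm) : ∀ X : Set M.W,
    M.sat X φ ↔ ∃ α ∈ NF φ, ∀ w ∈ X, psat M w α := by
  induction φ with
  | var p => intro X; simp [KModel.sat, NF, psat, Set.subset_def]
  | bot => intro X; simp [KModel.sat, NF, psat, Set.eq_empty_iff_forall_notMem]
  | cneg α =>
      intro X
      have hsing : ∀ (w : M.W), M.csat {w} α ↔ psat M w α := by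
        intro w; rw [csat_iff]; simp
      simp only [KModel.sat, NF, List.mem_singleton, exists_eq_left, psat]
      exact forall₂_congr (fun w _ => not_congr (hsing w))
  | dep αs β =>
      intro X
      rw [dep_iff]
      simp only [NF, List.mem_map, Finset.mem_toList, Finset.mem_univ, true_and]
      constructor
      · rintro ⟨F, hF⟩
        exact ⟨depForm αs β F, ⟨F, rfl⟩, fun w hw => (psat_depForm M αs β F w).2 (hF w hw)⟩
      · rintro ⟨_, ⟨F, rfl⟩, h⟩
        exact ⟨F, fun w hw => (psat_depForm M αs β F w).1 (h w hw)⟩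
  | and φ ψ ihφ ihψ =>
      intro X
      simp only [KModel.sat, NF, ihφ, ihψ, List.mem_flatMap, List.mem_map]
      constructor
      · rintro ⟨⟨a, ha, hwa⟩, ⟨b, hb, hwb⟩⟩
        exact ⟨CForm.and a b, ⟨a, ha, b, hb, rfl⟩, fun w hw => ⟨hwa w hw, hwb w hw⟩⟩
      · rintro ⟨_, ⟨a, ha, b, hb, rfl⟩, h⟩
        exact ⟨⟨a, ha, fun w hw => (h w hw).1⟩, ⟨b, hb, fun w hw => (h w hw).2⟩⟩
  | tensor φ ψ ihφ ihψ =>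
      intro X
      simp only [KModel.sat, NF, List.mem_flatMap, List.mem_map]
      constructor
      · rintro ⟨Y, Z, rfl, hY, hZ⟩
        obtain ⟨a, ha, hwa⟩ := (ihφ Y).1 hY
        obtain ⟨b, hb, hwb⟩ := (ihψ Z).1 hZ
        refine ⟨CForm.tensor a b, ⟨a, ha, b, hb, rfl⟩, ?_⟩
        rintro w (hw | hw)
        · exact Or.inl (hwa w hw)
        · exact Or.inr (hwb w hw)
      · rintro ⟨_, ⟨a, ha, b, hb, rfl⟩, h⟩
        refine ⟨{w ∈ X | psat M w a}, {w ∈ X | ¬ psat M w a}, ?_, ?_, ?_⟩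
        · ext w; by_cases hp : psat M w a <;> simp [hp]
        · exact (ihφ _).2 ⟨a, ha, fun w hw => hw.2⟩
        · refine (ihψ _).2 ⟨b, hb, fun w hw => ?_⟩
          rcases h w hw.1 with h' | h'
          · exact absurd h' hw.2
          · exact h'
  | or φ ψ ihφ ihψ =>
      intro X
      simp only [KModel.sat, NF, ihφ, ihψ, List.mem_append]
      aesop
  | box φ ih =>
      intro X
      simp only [KModel.sat, NF, ih, List.mem_map]
      constructor
      · rintro ⟨a, ha, h⟩
        exact ⟨CForm.box a, ⟨a, ha, rfl⟩, fun w hw u hu => h u ⟨w, hw, hu⟩⟩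
      · rintro ⟨_, ⟨a, ha, rfl⟩, h⟩
        exact ⟨a, ha, by rintro u ⟨w, hw, hu⟩; exact h w hw u hu⟩
  | dia φ ih =>
      intro X
      simp only [KModel.sat, NF, List.mem_map]
      constructor
      · rintro ⟨Y, ⟨hYsub, hYsucc⟩, hY⟩
        obtain ⟨a, ha, h⟩ := (ih Y).1 hY
        refine ⟨CForm.dia a, ⟨a, ha, rfl⟩, fun w hw => ?_⟩
        obtain ⟨u, hu, hru⟩ := hYsucc w hw
        exact ⟨u, hru, h u hu⟩
      · rintro ⟨_, ⟨a, ha, rfl⟩, h⟩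
        refine ⟨{u | (∃ w ∈ X, M.R w u) ∧ psat M u a}, ⟨fun u hu => hu.1, ?_⟩, ?_⟩
        · intro w hw
          obtain ⟨u, hru, hp⟩ := h w hw
          exact ⟨u, ⟨⟨w, hw, hru⟩, hp⟩, hru⟩
        · exact (ih _).2 ⟨a, ha, fun u hu => hu.2⟩
open FirstOrder FirstOrder.Language

/-- Relation symbols: unary symbols `Option ℕ` (none = team, some p = valuation of p),
one binary symbol (accessibility). -/
def Rels : ℕ → Type
  | 1 => Option ℕ
  | 2 => Unit
  | _ => Empty

/-- The first-order language for Kripke models with a team predicate. -/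
def L : FirstOrder.Language := ⟨fun _ => Empty, Rels⟩

def teamRel : L.Relations 1 := (none : Option ℕ)
def propRel (p : ℕ) : L.Relations 1 := (some p : Option ℕ)
def accRel : L.Relations 2 := ()

/-- The structure on M.W induced by a Kripke model with a team. -/
def str (M : KModel) (X : Set M.W) : L.Structure M.W where
  funMap := fun {n} f _ => Empty.elim f
  RelMap := fun {n} r v =>
    match n, r, v with
    | 1, none, v => v 0 ∈ X
    | 1, some p, v => v 0 ∈ M.V p
    | 2, _, v => M.R (v 0) (v 1)

/-- The Kripke model induced by an L-structure. -/
def toKModel (W : Type) [L.Structure W] (ne : Nonempty W) : KModel where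
  W := W
  ne := ne
  R := fun a b => Structure.RelMap accRel ![a, b]
  V := fun p => {w | Structure.RelMap (propRel p) ![w]}

/-- The team induced by an L-structure. -/
def team (W : Type) [L.Structure W] : Set W := {w | Structure.RelMap teamRel ![w]}

theorem toKModel_str (M : KModel) (X : Set M.W) :
    @toKModel M.W (str M X) M.ne = M := by
  cases M with
  | mk W ne R V =>
    simp only [toKModel, KModel.mk.injEq, heq_iff_eq, true_and]
    constructor
    · funext a b
      simp [str, accRel]; exact Iff.rfl
    · funext p
      ext w
      simp [str, propRel, Set.mem_setOf_eq]; exact Iff.rfl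

theorem team_str (M : KModel) (X : Set M.W) : @team M.W (str M X) = X := by
  ext w
  simp [team, str, teamRel, Set.mem_setOf_eq]; exact Iff.rfl
open FirstOrder.Language.BoundedFormula in
/-- Standard translation of a classical modal formula into first-order logic;
`i` is the free variable denoting the evaluation point. -/
def st : CForm → (n : ℕ) → Fin n → L.BoundedFormula Empty n
  | .var p, _, i => (propRel p).boundedFormula₁ (Term.var (Sum.inr i))
  | .bot, _, _ => ⊥
  | .neg α, n, i => (st α n i).not
  | .and α β, n, i => st α n i ⊓ st β n i
  | .tensor α β, n, i => st α n i ⊔ st β n i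
  | .box α, n, i =>
      BoundedFormula.all
        ((accRel.boundedFormula₂ (Term.var (Sum.inr i.castSucc))
          (Term.var (Sum.inr (Fin.last n)))).imp (st α (n + 1) (Fin.last n)))
  | .dia α, n, i =>
      BoundedFormula.ex
        ((accRel.boundedFormula₂ (Term.var (Sum.inr i.castSucc))
          (Term.var (Sum.inr (Fin.last n)))) ⊓ (st α (n + 1) (Fin.last n)))

theorem realize_st {W : Type} [L.Structure W] (ne : Nonempty W) (α : CForm) :
    ∀ (n : ℕ) (i : Fin n) (e : Empty → W) (v : Fin n → W),
      (st α n i).Realize e v ↔ psat (toKModel W ne) (v i) α := by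
  induction α with
  | var p =>
      intro n i e v
      simp only [st, BoundedFormula.realize_rel₁, Term.realize_var, Sum.elim_inr]
      simp [toKModel, psat]; exact Iff.rfl
  | bot => intro n i e v; simp [st, psat]
  | neg α ih => intro n i e v; simp [st, BoundedFormula.realize_not, ih, psat]
  | and α β ihα ihβ =>
      intro n i e v; simp [st, BoundedFormula.realize_inf, ihα, ihβ, psat]
  | tensor α β ihα ihβ =>
      intro n i e v; simp [st, BoundedFormula.realize_sup, ihα, ihβ, psat]
  | box α ih =>
      intro n i e v
      simp only [st, BoundedFormula.realize_all, BoundedFormula.realize_imp,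
        BoundedFormula.realize_rel₂, Term.realize_var, Sum.elim_inr, ih, psat]
      refine forall_congr' (fun a => ?_)
      rw [Fin.snoc_castSucc, Fin.snoc_last]
      rfl
  | dia α ih =>
      intro n i e v
      simp only [st, BoundedFormula.realize_ex, BoundedFormula.realize_inf,
        BoundedFormula.realize_rel₂, Term.realize_var, Sum.elim_inr, ih, psat]
      refine exists_congr (fun a => ?_)
      rw [Fin.snoc_castSucc, Fin.snoc_last]
      rfl
/-- Finite disjunction of sentences. -/
def disjSent : List L.Sentence → L.Sentence
  | [] => ⊥
  | s :: l => s ⊔ disjSent l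

/-- The sentence asserting that every team element satisfies α. -/
def clauseSent (α : CForm) : L.Sentence :=
  BoundedFormula.all ((teamRel.boundedFormula₁ (Term.var (Sum.inr 0))).imp (st α 1 0))

/-- The first-order sentence equivalent to an MD∨ formula over team structures. -/
noncomputable def TSent (φ : MDVForm) : L.Sentence := disjSent ((NF φ).map clauseSent)

theorem realize_disjSent (W : Type) [L.Structure W] (l : List L.Sentence) :
    W ⊨ disjSent l ↔ ∃ s ∈ l, W ⊨ s := by
  induction l with
  | nil => simp [disjSent, Sentence.Realize, BoundedFormula.realize_bot]
  | cons s l ih =>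
      simp only [disjSent, List.mem_cons]
      constructor
      · intro h
        rcases (BoundedFormula.realize_sup).1 h with h | h
        · exact ⟨s, Or.inl rfl, h⟩
        · obtain ⟨t, ht, h⟩ := ih.1 h
          exact ⟨t, Or.inr ht, h⟩
      · rintro ⟨t, ht | ht, h⟩
        · subst ht; exact (BoundedFormula.realize_sup).2 (Or.inl h)
        · exact (BoundedFormula.realize_sup).2 (Or.inr (ih.2 ⟨t, ht, h⟩))

theorem realize_clauseSent (W : Type) [L.Structure W] (ne : Nonempty W) (α : CForm) :
    W ⊨ clauseSent α ↔ ∀ w ∈ team W, psat (toKModel W ne) w α := by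
  simp only [clauseSent, Sentence.Realize, BoundedFormula.realize_all,
    BoundedFormula.realize_imp, BoundedFormula.realize_rel₁, Term.realize_var, Sum.elim_inr]
  refine forall_congr' (fun a => ?_)
  rw [BoundedFormula.realize_imp, BoundedFormula.realize_rel₁, realize_st ne α 1 0]
  have h0 : (Fin.snoc default a : Fin 1 → W) 0 = a := by
    simp [Fin.snoc]
  rw [h0]
  constructor
  · intro h hw
    apply h
    simpa [team, Fin.snoc] using hw
  · intro h hw
    apply h
    simpa [team, Fin.snoc] using hw

theorem realize_TSent (W : Type) [L.Structure W] (ne : Nonempty W) (φ : MDVForm) :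
    W ⊨ TSent φ ↔ (toKModel W ne).sat (team W) φ := by
  rw [TSent, realize_disjSent]
  refine Iff.trans ?_ (sat_iff_NF (toKModel W ne) φ (team W)).symm
  constructor
  · rintro ⟨s, hs, h⟩
    obtain ⟨α, hα, rfl⟩ := List.mem_map.1 hs
    exact ⟨α, hα, (realize_clauseSent W ne α).1 h⟩
  · rintro ⟨α, hα, h⟩
    exact ⟨clauseSent α, List.mem_map.2 ⟨α, hα, rfl⟩, (realize_clauseSent W ne α).2 h⟩
end MDVCompact

open MDVCompact FirstOrder FirstOrder.Language in
/-- Compactness Theorem for MD∨. -/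
theorem compactness (Γ : Set MDVForm) (φ : MDVForm) (h : SetEntails Γ φ) :
    ∃ Δ : Set MDVForm, Δ ⊆ Γ ∧ Δ.Finite ∧ SetEntails Δ φ := by
  classical
  set Th : MDVCompact.L.Theory := (TSent '' Γ) ∪ {(TSent φ).not} with hTh
  have hunsat : ¬ Th.IsSatisfiable := by
    rintro ⟨N⟩
    have ne : Nonempty N := N.nonempty'
    have h1 : ∀ γ ∈ Γ, (N : Type _) ⊨ TSent γ := fun γ hγ =>
      Th.realize_sentence_of_mem (Set.mem_union_left _ ⟨γ, hγ, rfl⟩)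
    have h2 : (N : Type _) ⊨ (TSent φ).not :=
      Th.realize_sentence_of_mem (Set.mem_union_right _ rfl)
    rw [Sentence.realize_not] at h2
    apply h2
    rw [realize_TSent _ ne]
    exact h _ _ (fun γ hγ => (realize_TSent _ ne γ).1 (h1 γ hγ))
  rw [Theory.isSatisfiable_iff_isFinitelySatisfiable] at hunsat
  rw [Theory.IsFinitelySatisfiable] at hunsat
  push_neg at hunsat
  obtain ⟨T0, hT0sub, hT0⟩ := hunsat
  set g : MDVCompact.L.Sentence → MDVForm := fun s =>
    if hex : ∃ γ ∈ Γ, TSent γ = s then hex.choose else φ with hg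
  set Δ : Set MDVForm := g '' {s ∈ (↑T0 : Set MDVCompact.L.Sentence) | ∃ γ ∈ Γ, TSent γ = s}
    with hΔ
  have hgspec : ∀ s, ∀ hex : ∃ γ ∈ Γ, TSent γ = s, g s ∈ Γ ∧ TSent (g s) = s := by
    intro s hex
    rw [hg]
    dsimp only
    rw [dif_pos hex]
    exact ⟨hex.choose_spec.1, hex.choose_spec.2⟩
  refine ⟨Δ, ?_, ?_, ?_⟩
  · rintro δ ⟨s, hs, rfl⟩
    exact (hgspec s hs.2).1
  · exact (T0.finite_toSet.subset (Set.sep_subset _ _)).image g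
  · intro M X hsat
    by_contra hφs
    letI inst : MDVCompact.L.Structure M.W := str M X
    haveI hne : Nonempty M.W := M.ne
    have key : ∀ s ∈ (↑T0 : MDVCompact.L.Theory), M.W ⊨ s := by
      intro s hs
      rcases hT0sub hs with hmem | hmem
      · have hex : ∃ γ ∈ Γ, TSent γ = s := by
          obtain ⟨γ, hγ, rfl⟩ := hmem; exact ⟨γ, hγ, rfl⟩
        have hgs : g s ∈ Δ := ⟨s, ⟨hs, hex⟩, rfl⟩
        rw [← (hgspec s hex).2, realize_TSent M.W M.ne]
        exact hsat _ hgs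
      · rw [Set.mem_singleton_iff] at hmem
        subst hmem
        rw [Sentence.realize_not, realize_TSent M.W M.ne]
        exact hφs
    haveI : M.W ⊨ (↑T0 : MDVCompact.L.Theory) := ⟨fun ψ hψ => key ψ hψ⟩
    exact hT0 (Theory.Model.isSatisfiable (T := (↑T0 : MDVCompact.L.Theory)) M.W)
end

section
/- Completeness of the natural deduction system of MD∨: for all MD∨-formulas φ and ψ, φ⊨ψ if and only if φ⊢_{MD∨}ψ. -/
/-- Conjunction of a list of formulas (used only for nonempty lists). -/
def bigAnd : List MDVForm → MDVForm
  | [] => .bot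
  | [φ] => φ
  | φ :: ψ :: χs => .and φ (bigAnd (ψ :: χs))

/-- Tensor of a list of formulas (used only for nonempty lists). -/
def bigTensor : List MDVForm → MDVForm
  | [] => .bot
  | [φ] => φ
  | φ :: ψ :: χs => .tensor φ (bigTensor (ψ :: χs))

/-- α^1 := α and α^0 := ¬α. -/
def signed (b : Bool) (α : CForm) : MDVForm := if b then α.toMDV else .cneg α

/-- All Boolean vectors of length n (representing the functions v ∈ 2^{1,…,n}). -/
def allVecs : ℕ → List (List Bool)
  | 0 => [[]]
  | n + 1 => ((allVecs n).map (List.cons true)) ++ ((allVecs n).map (List.cons false))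

/-- The conjunct α₁^{v(1)} ∧ ⋯ ∧ αₖ^{v(k)} ∧ (β ∨ ¬β) for a sign vector v. -/
def depRow (αs : List CForm) (β : CForm) (v : List Bool) : MDVForm :=
  bigAnd (List.zipWith signed v αs ++ [MDVForm.or β.toMDV (.cneg β)])

/-- ⊗_{v ∈ 2^{1,…,k}} (α₁^{v(1)} ∧ ⋯ ∧ αₖ^{v(k)} ∧ (β ∨ ¬β)). -/
def depTensor (αs : List CForm) (β : CForm) : MDVForm :=
  bigTensor ((allVecs αs.length).map (depRow αs β))

/-- The natural deduction system of MD∨ : Γ ⊢ φ. -/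
inductive ND : Set MDVForm → MDVForm → Prop where
  | hyp {Γ : Set MDVForm} {φ : MDVForm} : φ ∈ Γ → ND Γ φ
  | andI {Γ : Set MDVForm} {φ ψ : MDVForm} : ND Γ φ → ND Γ ψ → ND Γ (φ.and ψ)
  | andE1 {Γ : Set MDVForm} {φ ψ : MDVForm} : ND Γ (φ.and ψ) → ND Γ φ
  | andE2 {Γ : Set MDVForm} {φ ψ : MDVForm} : ND Γ (φ.and ψ) → ND Γ ψ
  | dne {Γ : Set MDVForm} (α : CForm) : ND Γ (.cneg (.neg α)) → ND Γ α.toMDV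
  | exfalso {Γ : Set MDVForm} {φ : MDVForm} : ND Γ .bot → ND Γ φ
  | boxMon {Γ : Set MDVForm} {ψ : MDVForm} (l : List MDVForm) :
      (∀ χ ∈ l, ND Γ (.box χ)) → ND {χ | χ ∈ l} ψ → ND Γ (.box ψ)
  | interBoxDia {Γ : Set MDVForm} (α : CForm) :
      ND Γ (.cneg (.box α)) → ND Γ (.dia (.cneg α))
  | orI1 {Γ : Set MDVForm} {φ ψ : MDVForm} : ND Γ φ → ND Γ (φ.or ψ)
  | orI2 {Γ : Set MDVForm} {φ ψ : MDVForm} : ND Γ ψ → ND Γ (φ.or ψ)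
  | orE {Γ : Set MDVForm} {φ ψ χ : MDVForm} :
      ND Γ (φ.or ψ) → ND (insert φ Γ) χ → ND (insert ψ Γ) χ → ND Γ χ
  | distrTensorOr {Γ : Set MDVForm} {φ ψ χ : MDVForm} :
      ND Γ (φ.tensor (ψ.or χ)) → ND Γ ((φ.tensor ψ).or (φ.tensor χ))
  | distrDiaOr {Γ : Set MDVForm} {φ ψ : MDVForm} :
      ND Γ (.dia (φ.or ψ)) → ND Γ ((MDVForm.dia φ).or (.dia ψ))
  | distrBoxOr {Γ : Set MDVForm} {φ ψ : MDVForm} :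
      ND Γ (.box (φ.or ψ)) → ND Γ ((MDVForm.box φ).or (.box ψ))
  | tensorI {Γ : Set MDVForm} {φ : MDVForm} (ψ : MDVForm) : ND Γ φ → ND Γ (φ.tensor ψ)
  | tensorE {Γ : Set MDVForm} {φ ψ : MDVForm} (α : CForm) : ND Γ (φ.tensor ψ) →
      ND (insert φ Γ) α.toMDV → ND (insert ψ Γ) α.toMDV → ND Γ α.toMDV
  | tensorSub {Γ : Set MDVForm} {φ ψ χ : MDVForm} :
      ND Γ (φ.tensor ψ) → ND (insert ψ Γ) χ → ND Γ (φ.tensor χ)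
  | tensorComm {Γ : Set MDVForm} {φ ψ : MDVForm} : ND Γ (φ.tensor ψ) → ND Γ (ψ.tensor φ)
  | tensorAssoc {Γ : Set MDVForm} {φ ψ χ : MDVForm} :
      ND Γ (φ.tensor (ψ.tensor χ)) → ND Γ ((φ.tensor ψ).tensor χ)
  | depI {Γ : Set MDVForm} (αs : List CForm) (β : CForm) :
      ND Γ (depTensor αs β) → ND Γ (.dep αs β)
  | depE {Γ : Set MDVForm} (αs : List CForm) (β : CForm) :
      ND Γ (.dep αs β) → ND Γ (depTensor αs β)
  | negI {Γ : Set MDVForm} (α : CForm) : ND (insert α.toMDV Γ) .bot → ND Γ (.cneg α)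
  | negE {Γ : Set MDVForm} (α : CForm) : ND Γ α.toMDV → ND Γ (.cneg α) → ND Γ .bot
  | diaMon {Γ : Set MDVForm} {φ ψ : MDVForm} : ND Γ (.dia φ) → ND {φ} ψ → ND Γ (.dia ψ)
  | interDiaBox {Γ : Set MDVForm} (α : CForm) :
      ND Γ (.dia (.cneg α)) → ND Γ (.cneg (.box α))

/- ===================== Semantic lemmas ===================== -/

namespace KModel

theorem img_empty (M : KModel) : M.img (∅ : Set M.W) = ∅ := by
  ext w; simp [KModel.img]

theorem img_mono {M : KModel} {X Y : Set M.W} (h : X ⊆ Y) : M.img X ⊆ M.img Y := by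
  rintro w ⟨v, hv, hr⟩; exact ⟨v, h hv, hr⟩

theorem mem_img_of {M : KModel} {X : Set M.W} {w u : M.W} (hw : w ∈ X) (h : M.R w u) :
    u ∈ M.img X := ⟨w, hw, h⟩

theorem csat_flat {M : KModel} (α : CForm) : ∀ (X : Set M.W),
    M.csat X α ↔ ∀ w ∈ X, M.csat {w} α := by
  induction α with
  | var p => intro X; simp [KModel.csat, Set.subset_def]
  | bot => intro X; simp [KModel.csat, Set.eq_empty_iff_forall_notMem]
  | neg α ih => intro X; simp [KModel.csat]
  | and α β ih1 ih2 =>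
    intro X
    simp only [KModel.csat]
    constructor
    · rintro ⟨h1, h2⟩ w hw
      exact ⟨(ih1 X).1 h1 w hw, (ih2 X).1 h2 w hw⟩
    · intro h
      exact ⟨(ih1 X).2 fun w hw => (h w hw).1, (ih2 X).2 fun w hw => (h w hw).2⟩
  | tensor α β ih1 ih2 =>
    intro X
    simp only [KModel.csat]
    constructor
    · rintro ⟨Y, Z, rfl, hY, hZ⟩ w hw
      rcases hw with hw | hw
      · exact ⟨{w}, ∅, by simp, (ih1 Y).1 hY w hw, (ih2 ∅).2 (by simp)⟩
      · exact ⟨∅, {w}, by simp, (ih1 ∅).2 (by simp), (ih2 Z).1 hZ w hw⟩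
    · intro h
      refine ⟨{w ∈ X | M.csat {w} α}, {w ∈ X | ¬ M.csat {w} α}, ?_, ?_, ?_⟩
      · ext w; by_cases hc : M.csat {w} α <;> simp [hc]
      · exact (ih1 _).2 fun w hw => hw.2
      · refine (ih2 _).2 fun w hw => ?_
        rcases h w hw.1 with ⟨Y, Z, hYZ, hY, hZ⟩
        have hwYZ : w ∈ Y ∪ Z := hYZ ▸ rfl
        rcases hwYZ with hwY | hwZ
        · exfalso
          exact hw.2 ((ih1 Y).1 hY w hwY)
        · exact (ih2 Z).1 hZ w hwZ
  | box α ih =>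
    intro X
    simp only [KModel.csat]
    constructor
    · intro h w hw
      refine (ih _).2 fun u hu => ?_
      rcases hu with ⟨v, hv, hr⟩
      have hv' : v = w := hv
      subst hv'
      exact (ih _).1 h u ⟨v, hw, hr⟩
    · intro h
      refine (ih _).2 fun u hu => ?_
      rcases hu with ⟨v, hv, hr⟩
      exact (ih _).1 (h v hv) u ⟨v, rfl, hr⟩
  | dia α ih =>
    intro X
    simp only [KModel.csat]
    constructor
    · rintro ⟨Y, ⟨hsub, hcov⟩, hY⟩ w hw
      rcases hcov w hw with ⟨u, huY, hru⟩
      refine ⟨{u}, ⟨?_, ?_⟩, ?_⟩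
      · intro x hx; rcases hx with rfl; exact ⟨w, rfl, hru⟩
      · intro x hx; rcases hx with rfl; exact ⟨u, rfl, hru⟩
      · exact (ih Y).1 hY u huY
    · intro h
      choose Y hY1 hY2 using h
      refine ⟨⋃ (w : M.W) (hw : w ∈ X), Y w hw, ⟨?_, ?_⟩, ?_⟩
      · intro u hu
        simp only [Set.mem_iUnion] at hu
        rcases hu with ⟨w, hw, hu⟩
        rcases (hY1 w hw).1 hu with ⟨v, hv, hr⟩
        have hv' : v = w := hv
        subst hv'
        exact ⟨v, hw, hr⟩
      · intro w hw
        rcases (hY1 w hw).2 w rfl with ⟨u, huY, hru⟩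
        exact ⟨u, Set.mem_iUnion.2 ⟨w, Set.mem_iUnion.2 ⟨hw, huY⟩⟩, hru⟩
      · refine (ih _).2 fun u hu => ?_
        simp only [Set.mem_iUnion] at hu
        rcases hu with ⟨w, hw, hu⟩
        exact (ih _).1 (hY2 w hw) u hu

theorem csat_mono {M : KModel} {α : CForm} {X Y : Set M.W} (h : M.csat X α) (hYX : Y ⊆ X) :
    M.csat Y α :=
  (csat_flat α Y).2 fun w hw => (csat_flat α X).1 h w (hYX hw)

theorem csat_empty {M : KModel} (α : CForm) : M.csat (∅ : Set M.W) α :=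
  (csat_flat α ∅).2 (by simp)

theorem csat_union {M : KModel} {α : CForm} {X Y : Set M.W}
    (h1 : M.csat X α) (h2 : M.csat Y α) : M.csat (X ∪ Y) α :=
  (csat_flat α _).2 fun w hw => hw.elim (fun h => (csat_flat α X).1 h1 w h)
    (fun h => (csat_flat α Y).1 h2 w h)

theorem sat_toMDV {M : KModel} (α : CForm) : ∀ (X : Set M.W),
    M.sat X α.toMDV ↔ M.csat X α := by
  induction α with
  | var p => intro X; simp [CForm.toMDV, KModel.sat, KModel.csat]
  | bot => intro X; simp [CForm.toMDV, KModel.sat, KModel.csat]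
  | neg α ih => intro X; simp [CForm.toMDV, KModel.sat, KModel.csat]
  | and α β ih1 ih2 => intro X; simp [CForm.toMDV, KModel.sat, KModel.csat, ih1, ih2]
  | tensor α β ih1 ih2 => intro X; simp [CForm.toMDV, KModel.sat, KModel.csat, ih1, ih2]
  | box α ih => intro X; simp [CForm.toMDV, KModel.sat, KModel.csat, ih]
  | dia α ih => intro X; simp [CForm.toMDV, KModel.sat, KModel.csat, ih]

theorem sat_empty {M : KModel} (φ : MDVForm) : M.sat (∅ : Set M.W) φ := by
  induction φ with
  | var p => simp [KModel.sat]
  | bot => simp [KModel.sat]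
  | cneg α => simp [KModel.sat]
  | dep αs β => simp [KModel.sat]
  | and φ ψ ih1 ih2 => exact ⟨ih1, ih2⟩
  | tensor φ ψ ih1 ih2 => exact ⟨∅, ∅, by simp, ih1, ih2⟩
  | or φ ψ ih1 ih2 => exact Or.inl ih1
  | box φ ih => show M.sat (M.img ∅) φ; rw [img_empty]; exact ih
  | dia φ ih => exact ⟨∅, ⟨by simp, by simp⟩, ih⟩

theorem sat_mono {M : KModel} (φ : MDVForm) : ∀ {X Y : Set M.W},
    M.sat X φ → Y ⊆ X → M.sat Y φ := by
  induction φ with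
  | var p => intro X Y h hYX; exact hYX.trans h
  | bot =>
    intro X Y h hYX
    have h' : X = ∅ := h
    subst h'
    show Y = ∅
    exact Set.subset_eq_empty hYX rfl
  | cneg α => intro X Y h hYX w hw; exact h w (hYX hw)
  | dep αs β => intro X Y h hYX w hw u hu; exact h w (hYX hw) u (hYX hu)
  | and φ ψ ih1 ih2 => intro X Y h hYX; exact ⟨ih1 h.1 hYX, ih2 h.2 hYX⟩
  | tensor φ ψ ih1 ih2 =>
    intro X Y h hYX
    rcases h with ⟨Z1, Z2, rfl, h1, h2⟩
    exact ⟨Z1 ∩ Y, Z2 ∩ Y, by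
      ext w; constructor
      · intro hw; rcases hYX hw with h | h
        · exact Or.inl ⟨h, hw⟩
        · exact Or.inr ⟨h, hw⟩
      · rintro (⟨_, hw⟩ | ⟨_, hw⟩) <;> exact hw,
      ih1 h1 Set.inter_subset_left, ih2 h2 Set.inter_subset_left⟩
  | or φ ψ ih1 ih2 =>
    intro X Y h hYX
    exact h.elim (fun h => Or.inl (ih1 h hYX)) (fun h => Or.inr (ih2 h hYX))
  | box φ ih => intro X Y h hYX; exact ih h (img_mono hYX)
  | dia φ ih =>
    intro X Y h hYX
    rcases h with ⟨Z, ⟨hsub, hcov⟩, hZ⟩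
    refine ⟨Z ∩ M.img Y, ⟨Set.inter_subset_right, fun w hw => ?_⟩,
      ih hZ Set.inter_subset_left⟩
    rcases hcov w (hYX hw) with ⟨u, huZ, hru⟩
    exact ⟨u, ⟨huZ, ⟨w, hw, hru⟩⟩, hru⟩

end KModel
/- ===================== bigAnd / bigTensor / bigOr semantics ===================== -/

namespace KModel

theorem bigAnd_sat {M : KModel} : ∀ (l : List MDVForm), l ≠ [] → ∀ (X : Set M.W),
    (M.sat X (bigAnd l) ↔ ∀ φ ∈ l, M.sat X φ)
  | [], h, X => absurd rfl h
  | [φ], _, X => by simp [bigAnd]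
  | φ :: ψ :: l, _, X => by
    have ih := bigAnd_sat (M := M) (ψ :: l) (by simp) X
    show M.sat X φ ∧ M.sat X (bigAnd (ψ :: l)) ↔ _
    rw [ih]
    simp [List.forall_mem_cons]

theorem bigTensor_sat {M : KModel} : ∀ (l : List MDVForm), l ≠ [] → ∀ (X : Set M.W),
    (M.sat X (bigTensor l) ↔
      ∃ Ys : List (Set M.W), List.Forall₂ M.sat Ys l ∧ X = Ys.foldr (· ∪ ·) ∅)
  | [], h, X => absurd rfl h
  | [φ], _, X => by
    show M.sat X φ ↔ _
    constructor
    · intro h; exact ⟨[X], by simp [h], by simp⟩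
    · rintro ⟨Ys, hF, rfl⟩
      cases hF with
      | cons hY hF =>
        cases hF
        simpa using hY
  | φ :: ψ :: l, _, X => by
    have ih := bigTensor_sat (M := M) (ψ :: l) (by simp)
    show (∃ Y Z, X = Y ∪ Z ∧ M.sat Y φ ∧ M.sat Z (bigTensor (ψ :: l))) ↔ _
    constructor
    · rintro ⟨Y, Z, rfl, hY, hZ⟩
      rcases (ih Z).1 hZ with ⟨Ys, hF, rfl⟩
      exact ⟨Y :: Ys, List.Forall₂.cons hY hF, rfl⟩
    · rintro ⟨Ys, hF, rfl⟩
      cases hF with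
      | cons hY hF => exact ⟨_, _, rfl, hY, (ih _).2 ⟨_, hF, rfl⟩⟩

end KModel

/-- Disjunction of a list of formulas (used only for nonempty lists). -/
def bigOr : List MDVForm → MDVForm
  | [] => .bot
  | [φ] => φ
  | φ :: ψ :: χs => .or φ (bigOr (ψ :: χs))

namespace KModel

theorem bigOr_sat {M : KModel} : ∀ (l : List MDVForm), l ≠ [] → ∀ (X : Set M.W),
    (M.sat X (bigOr l) ↔ ∃ φ ∈ l, M.sat X φ)
  | [], h, X => absurd rfl h
  | [φ], _, X => by simp [bigOr]
  | φ :: ψ :: l, _, X => by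
    have ih := bigOr_sat (M := M) (ψ :: l) (by simp) X
    show M.sat X φ ∨ M.sat X (bigOr (ψ :: l)) ↔ _
    rw [ih]
    simp

end KModel

/- ===================== allVecs lemmas ===================== -/

theorem allVecs_length : ∀ {n : ℕ} {v : List Bool}, v ∈ allVecs n → v.length = n := by
  intro n
  induction n with
  | zero => intro v hv; simp [allVecs] at hv; simp [hv]
  | succ n ih =>
    intro v hv
    simp only [allVecs, List.mem_append, List.mem_map] at hv
    rcases hv with ⟨w, hw, rfl⟩ | ⟨w, hw, rfl⟩ <;> simp [ih hw]

theorem mem_allVecs : ∀ {n : ℕ} {v : List Bool}, v.length = n → v ∈ allVecs n := by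
  intro n
  induction n with
  | zero => intro v hv; simp [List.length_eq_zero_iff] at hv; simp [hv, allVecs]
  | succ n ih =>
    intro v hv
    rcases v with _ | ⟨b, w⟩
    · simp at hv
    · simp only [List.length_cons, Nat.succ.injEq] at hv
      have hw := ih hv
      rcases b with _ | _
      · exact List.mem_append.2 (Or.inr (List.mem_map.2 ⟨w, hw, rfl⟩))
      · exact List.mem_append.2 (Or.inl (List.mem_map.2 ⟨w, hw, rfl⟩))

theorem allVecs_nodup : ∀ (n : ℕ), (allVecs n).Nodup := by
  intro n
  induction n with
  | zero => simp [allVecs]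
  | succ n ih =>
    simp only [allVecs]
    refine List.Nodup.append (ih.map ?_) (ih.map ?_) ?_
    · intro a b h; injection h
    · intro a b h; injection h
    · intro v h1 h2
      simp only [List.mem_map] at h1 h2
      rcases h1 with ⟨a, _, rfl⟩
      rcases h2 with ⟨b, _, h⟩
      injection h with h1 h2
      exact Bool.noConfusion h1

/- ===================== pattern of a world ===================== -/

attribute [local instance] Classical.propDecidable

noncomputable def KModel.pat (M : KModel) (w : M.W) (αs : List CForm) : List Bool :=
  αs.map fun α => decide (M.csat {w} α)

theorem KModel.pat_length {M : KModel} (w : M.W) (αs : List CForm) :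
    (M.pat w αs).length = αs.length := List.length_map _

theorem KModel.pat_eq_iff {M : KModel} {w u : M.W} {αs : List CForm} :
    M.pat w αs = M.pat u αs ↔ ∀ α ∈ αs, (M.csat {w} α ↔ M.csat {u} α) := by
  unfold KModel.pat
  rw [List.map_inj_left]
  constructor
  · intro h α hα
    exact decide_eq_decide.1 (h α hα)
  · intro h α hα
    exact decide_eq_decide.2 (h α hα)

/-- If all worlds in `Y` have pattern `v` on `αs`, then `Y` satisfies all the signed formulas. -/
theorem signed_sat_of_pat {M : KModel} {Y : Set M.W} :
    ∀ (v : List Bool) (αs : List CForm), v.length = αs.length →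
      (∀ w ∈ Y, M.pat w αs = v) →
      ∀ φ ∈ List.zipWith signed v αs, M.sat Y φ
  | [], [], _, _ => by simp
  | [], α :: αs, h, _ => by simp at h
  | b :: v, [], h, _ => by simp at h
  | b :: v, α :: αs, hlen, hp => by
    have hhead : ∀ w ∈ Y, (M.csat {w} α ↔ b = true) := by
      intro w hw
      have := hp w hw
      unfold KModel.pat at this
      simp only [List.map_cons, List.cons.injEq] at this
      rw [← this.1]
      simp [decide_eq_true_iff]
    have htail : ∀ w ∈ Y, M.pat w αs = v := by
      intro w hw
      have := hp w hw
      unfold KModel.pat at this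
      simp only [List.map_cons, List.cons.injEq] at this
      exact this.2
    intro φ hφ
    simp only [List.zipWith_cons_cons, List.mem_cons] at hφ
    rcases hφ with rfl | hφ
    · rcases b with _ | _
      · intro w hw
        simp only [signed, Bool.false_eq_true, if_false]  at *
        intro hc
        exact absurd ((hhead w hw).1 hc) (by simp)
      · simp only [signed, if_true]
        rw [KModel.sat_toMDV]
        exact (KModel.csat_flat α Y).2 fun w hw => (hhead w hw).2 rfl
    · exact signed_sat_of_pat v αs (by simpa using hlen) htail φ hφ

/-- Conversely, a world in a team satisfying the signed formulas has pattern `v`. -/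
theorem pat_of_signed_sat {M : KModel} {Y : Set M.W} :
    ∀ (v : List Bool) (αs : List CForm), v.length = αs.length →
      (∀ φ ∈ List.zipWith signed v αs, M.sat Y φ) →
      ∀ w ∈ Y, M.pat w αs = v
  | [], [], _, _ => by intro w _; simp [KModel.pat]
  | [], α :: αs, h, _ => by simp at h
  | b :: v, [], h, _ => by simp at h
  | b :: v, α :: αs, hlen, hs => by
    intro w hw
    have hhead := hs (signed b α) (by simp)
    have htail := pat_of_signed_sat v αs (by simpa using hlen)
      (fun φ hφ => hs φ (by simp [hφ])) w hw
    unfold KModel.pat at htail ⊢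
    simp only [List.map_cons, htail, List.cons.injEq, and_true]
    rcases b with _ | _
    · simp only [signed, Bool.false_eq_true, if_false] at hhead
      have := hhead w hw
      simp [decide_eq_false_iff_not]
      intro hc
      exact this hc
    · simp only [signed, if_true] at hhead
      rw [KModel.sat_toMDV] at hhead
      simp [decide_eq_true_iff]
      exact (KModel.csat_flat α Y).1 hhead w hw

/- ===================== foldr-union helpers ===================== -/

theorem mem_foldr_union {W : Type} {w : W} : ∀ {Ys : List (Set W)} {Y : Set W},
    Y ∈ Ys → w ∈ Y → w ∈ Ys.foldr (· ∪ ·) ∅ := by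
  intro Ys
  induction Ys with
  | nil => intro Y h; simp at h
  | cons Z Ys ih =>
    intro Y h hw
    rcases h with _ | h
    · exact Or.inl hw
    · exact Or.inr (ih (by assumption) hw)

theorem foldr_union_subset {W : Type} {X : Set W} : ∀ {Ys : List (Set W)},
    (∀ Y ∈ Ys, Y ⊆ X) → Ys.foldr (· ∪ ·) ∅ ⊆ X := by
  intro Ys
  induction Ys with
  | nil => intro _; simp
  | cons Z Ys ih =>
    intro h w hw
    rcases hw with hw | hw
    · exact h Z (by simp) hw
    · exact ih (fun Y hY => h Y (by simp [hY])) hw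

theorem exists_of_mem_foldr_union {W : Type} {w : W} {β : Type} {P : Set W → β → Prop} :
    ∀ {Ys : List (Set W)} {l : List β}, List.Forall₂ P Ys l →
      w ∈ Ys.foldr (· ∪ ·) ∅ → ∃ Y b, (Y, b) ∈ Ys.zip l ∧ P Y b ∧ w ∈ Y := by
  intro Ys l h
  induction h with
  | nil => intro h; simp at h
  | cons hPa hF ih =>
    intro hw
    rcases hw with hw | hw
    · exact ⟨_, _, by simp, hPa, hw⟩
    · rcases ih hw with ⟨Y, b, hmem, hP, hwY⟩
      exact ⟨Y, b, by simp [hmem], hP, hwY⟩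

theorem zip_nodup_unique {W β : Type} : ∀ {Ys : List (Set W)} {l : List β} {Y Y' : Set W} {b : β},
    l.Nodup → (Y, b) ∈ Ys.zip l → (Y', b) ∈ Ys.zip l → Y = Y' := by
  intro Ys
  induction Ys with
  | nil => intro l Y Y' b _ h; simp at h
  | cons Z Ys ih =>
    intro l Y Y' b hnd h1 h2
    rcases l with _ | ⟨c, l⟩
    · simp at h1
    · have hc : c ∉ l := (List.nodup_cons.1 hnd).1
      simp only [List.zip_cons_cons, List.mem_cons, Prod.mk.injEq] at h1 h2
      rcases h1 with ⟨rfl, rfl⟩ | h1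
      · rcases h2 with ⟨rfl, _⟩ | h2
        · rfl
        · exact absurd (List.of_mem_zip h2).2 hc
      · rcases h2 with ⟨rfl, rfl⟩ | h2
        · exact absurd (List.of_mem_zip h1).2 hc
        · exact ih (List.nodup_cons.1 hnd).2 h1 h2
/- ===================== dep ≡ depTensor semantically ===================== -/

theorem allVecs_ne_nil : ∀ (n : ℕ), allVecs n ≠ [] := by
  intro n
  induction n with
  | zero => simp [allVecs]
  | succ n ih =>
    simp only [allVecs, ne_eq, List.append_eq_nil_iff, List.map_eq_nil_iff]
    intro ⟨h, _⟩
    exact ih h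

theorem depRow_ne_nil_aux (αs : List CForm) (β : CForm) (v : List Bool) :
    List.zipWith signed v αs ++ [MDVForm.or β.toMDV (.cneg β)] ≠ [] := by simp

theorem KModel.sat_dep_iff {M : KModel} {X : Set M.W} (αs : List CForm) (β : CForm) :
    M.sat X (.dep αs β) ↔ M.sat X (depTensor αs β) := by
  constructor
  · intro h
    rw [depTensor, KModel.bigTensor_sat _ (by simp [allVecs_ne_nil])]
    refine ⟨(allVecs αs.length).map (fun v => {w | w ∈ X ∧ M.pat w αs = v}), ?_, ?_⟩
    · rw [List.forall₂_map_left_iff, List.forall₂_map_right_iff, List.forall₂_same]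
      intro v hv
      rw [depRow, KModel.bigAnd_sat _ (depRow_ne_nil_aux αs β v)]
      intro φ hφ
      rcases List.mem_append.1 hφ with hφ | hφ
      · exact signed_sat_of_pat v αs (allVecs_length hv)
          (fun w hw => hw.2) φ hφ
      · have hφ' : φ = MDVForm.or β.toMDV (.cneg β) := by simpa using hφ
        subst hφ'
        by_cases hc : ∃ w₀, w₀ ∈ ({w | w ∈ X ∧ M.pat w αs = v} : Set M.W) ∧ M.csat {w₀} β
        · rcases hc with ⟨w₀, hw₀, hcβ⟩
          left
          rw [KModel.sat_toMDV]
          refine (KModel.csat_flat β _).2 fun u hu => ?_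
          have hagree : ∀ α ∈ αs, (M.csat {w₀} α ↔ M.csat {u} α) :=
            KModel.pat_eq_iff.1 (hw₀.2.trans hu.2.symm)
          exact (h w₀ hw₀.1 u hu.1 hagree).1 hcβ
        · right
          intro u hu hcβ
          exact hc ⟨u, hu, hcβ⟩
    · apply Set.Subset.antisymm
      · intro w hw
        refine mem_foldr_union (Y := {w' | w' ∈ X ∧ M.pat w' αs = M.pat w αs}) ?_ ⟨hw, rfl⟩
        exact List.mem_map.2 ⟨M.pat w αs, mem_allVecs (M.pat_length w αs), rfl⟩
      · apply foldr_union_subset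
        intro Y hY
        rcases List.mem_map.1 hY with ⟨v, _, rfl⟩
        exact fun w hw => hw.1
  · intro h
    rw [depTensor, KModel.bigTensor_sat _ (by simp [allVecs_ne_nil])] at h
    rcases h with ⟨Ys, hF, rfl⟩
    rw [List.forall₂_map_right_iff] at hF
    intro w hw u hu hagree
    rcases exists_of_mem_foldr_union hF hw with ⟨Yw, vw, hzw, hsw, hww⟩
    rcases exists_of_mem_foldr_union hF hu with ⟨Yu, vu, hzu, hsu, huu⟩
    rw [depRow, KModel.bigAnd_sat _ (depRow_ne_nil_aux αs β vw)] at hsw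
    rw [depRow, KModel.bigAnd_sat _ (depRow_ne_nil_aux αs β vu)] at hsu
    have hvw : vw.length = αs.length := allVecs_length (List.of_mem_zip hzw).2
    have hvu : vu.length = αs.length := allVecs_length (List.of_mem_zip hzu).2
    have hpw : M.pat w αs = vw :=
      pat_of_signed_sat vw αs hvw (fun φ hφ => hsw φ (List.mem_append.2 (Or.inl hφ))) w hww
    have hpu : M.pat u αs = vu :=
      pat_of_signed_sat vu αs hvu (fun φ hφ => hsu φ (List.mem_append.2 (Or.inl hφ))) u huu
    have hveq : vw = vu := by
      rw [← hpw, ← hpu]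
      exact KModel.pat_eq_iff.2 hagree
    subst hveq
    have hYeq : Yw = Yu := zip_nodup_unique (allVecs_nodup _) hzw hzu
    subst hYeq
    have hor := hsw (MDVForm.or β.toMDV (.cneg β)) (List.mem_append.2 (Or.inr (by simp)))
    rcases hor with hor | hor
    · rw [KModel.sat_toMDV] at hor
      constructor
      · intro _; exact (KModel.csat_flat β Yw).1 hor u huu
      · intro _; exact (KModel.csat_flat β Yw).1 hor w hww
    · constructor
      · intro hc; exact absurd hc (hor w hww)
      · intro hc; exact absurd hc (hor u huu)
/- ===================== Soundness ===================== -/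

theorem ND.sound {Γ : Set MDVForm} {φ : MDVForm} (h : ND Γ φ) : SetEntails Γ φ := by
  induction h with
  | hyp hmem => intro M X hX; exact hX _ hmem
  | andI h1 h2 ih1 ih2 => intro M X hX; exact ⟨ih1 M X hX, ih2 M X hX⟩
  | andE1 h ih => intro M X hX; exact (ih M X hX).1
  | andE2 h ih => intro M X hX; exact (ih M X hX).2
  | dne α h ih =>
    intro M X hX
    have hc := ih M X hX
    rw [KModel.sat_toMDV]
    refine (KModel.csat_flat α X).2 fun w hw => ?_
    by_contra hcα
    exact hc w hw (fun u hu => by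
      have : u = w := hu
      subst this
      exact hcα)
  | exfalso h ih =>
    intro M X hX
    have : X = ∅ := ih M X hX
    subst this
    exact KModel.sat_empty _
  | boxMon l hprem hinner ihprem ihinner =>
    intro M X hX
    show M.sat (M.img X) _
    exact ihinner M (M.img X) fun γ hγ => ihprem γ hγ M X hX
  | interBoxDia α h ih =>
    intro M X hX
    have hc := ih M X hX
    refine ⟨{u | u ∈ M.img X ∧ ¬ M.csat {u} α}, ⟨fun u hu => hu.1, ?_⟩, fun u hu => hu.2⟩
    intro w hw
    have : ¬ M.csat (M.img {w}) α := hc w hw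
    rw [KModel.csat_flat] at this
    push_neg at this
    rcases this with ⟨u, hu, hnc⟩
    rcases hu with ⟨v, hv, hr⟩
    have : v = w := hv
    subst this
    exact ⟨u, ⟨⟨v, hw, hr⟩, hnc⟩, hr⟩
  | orI1 h ih => intro M X hX; exact Or.inl (ih M X hX)
  | orI2 h ih => intro M X hX; exact Or.inr (ih M X hX)
  | orE h h1 h2 ih ih1 ih2 =>
    intro M X hX
    rcases ih M X hX with hc | hc
    · exact ih1 M X fun γ hγ => by
        rcases hγ with rfl | hγ
        exacts [hc, hX _ hγ]
    · exact ih2 M X fun γ hγ => by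
        rcases hγ with rfl | hγ
        exacts [hc, hX _ hγ]
  | distrTensorOr h ih =>
    intro M X hX
    rcases ih M X hX with ⟨Y, Z, rfl, hY, hZ⟩
    rcases hZ with hZ | hZ
    · exact Or.inl ⟨Y, Z, rfl, hY, hZ⟩
    · exact Or.inr ⟨Y, Z, rfl, hY, hZ⟩
  | distrDiaOr h ih =>
    intro M X hX
    rcases ih M X hX with ⟨Y, hs, hY | hY⟩
    · exact Or.inl ⟨Y, hs, hY⟩
    · exact Or.inr ⟨Y, hs, hY⟩
  | distrBoxOr h ih =>
    intro M X hX
    rcases ih M X hX with hc | hc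
    · exact Or.inl hc
    · exact Or.inr hc
  | tensorI ψ h ih =>
    intro M X hX
    exact ⟨X, ∅, (Set.union_empty X).symm, ih M X hX, KModel.sat_empty _⟩
  | tensorE α h h1 h2 ih ih1 ih2 =>
    intro M X hX
    rcases ih M X hX with ⟨Y, Z, rfl, hY, hZ⟩
    have hYα := (KModel.sat_toMDV α Y).1 (ih1 M Y (fun γ hγ => by
      rcases hγ with rfl | hγ
      exacts [hY, KModel.sat_mono _ (hX _ hγ) Set.subset_union_left]))
    have hZα := (KModel.sat_toMDV α Z).1 (ih2 M Z (fun γ hγ => by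
      rcases hγ with rfl | hγ
      exacts [hZ, KModel.sat_mono _ (hX _ hγ) Set.subset_union_right]))
    exact (KModel.sat_toMDV α _).2 (KModel.csat_union hYα hZα)
  | tensorSub h h1 ih ih1 =>
    intro M X hX
    rcases ih M X hX with ⟨Y, Z, rfl, hY, hZ⟩
    refine ⟨Y, Z, rfl, hY, ih1 M Z fun γ hγ => ?_⟩
    rcases hγ with rfl | hγ
    exacts [hZ, KModel.sat_mono _ (hX _ hγ) Set.subset_union_right]
  | tensorComm h ih =>
    intro M X hX
    rcases ih M X hX with ⟨Y, Z, rfl, hY, hZ⟩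
    exact ⟨Z, Y, Set.union_comm Y Z, hZ, hY⟩
  | tensorAssoc h ih =>
    intro M X hX
    rcases ih M X hX with ⟨Y, Z, rfl, hY, W', V, rfl, hW, hV⟩
    exact ⟨Y ∪ W', V, (Set.union_assoc Y W' V).symm, ⟨Y, W', rfl, hY, hW⟩, hV⟩
  | depI αs β h ih =>
    intro M X hX
    exact (KModel.sat_dep_iff αs β).2 (ih M X hX)
  | depE αs β h ih =>
    intro M X hX
    exact (KModel.sat_dep_iff αs β).1 (ih M X hX)
  | negI α h ih =>
    intro M X hX
    intro w hw hcα
    have : ({w} : Set M.W) = ∅ := ih M {w} (fun γ hγ => by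
      rcases hγ with rfl | hγ
      · exact (KModel.sat_toMDV α _).2 hcα
      · exact KModel.sat_mono _ (hX _ hγ) (by simpa using hw))
    exact absurd this (by simp)
  | negE α h1 h2 ih1 ih2 =>
    intro M X hX
    have hα := (KModel.sat_toMDV α X).1 (ih1 M X hX)
    have hnα := ih2 M X hX
    show X = ∅
    rw [Set.eq_empty_iff_forall_notMem]
    intro w hw
    exact hnα w hw ((KModel.csat_flat α X).1 hα w hw)
  | diaMon h hinner ih ihinner =>
    intro M X hX
    rcases ih M X hX with ⟨Y, hs, hY⟩
    refine ⟨Y, hs, ihinner M Y fun γ hγ => ?_⟩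
    have : γ = _ := hγ
    subst this
    exact hY
  | interDiaBox α h ih =>
    intro M X hX
    rcases ih M X hX with ⟨Y, ⟨hsub, hcov⟩, hY⟩
    intro w hw hc
    rcases hcov w hw with ⟨u, huY, hr⟩
    have : M.csat {u} α := (KModel.csat_flat α _).1 hc u ⟨w, rfl, hr⟩
    exact hY u huY this
/- ===================== Weakening and cut ===================== -/

theorem ND.weak {Γ Δ : Set MDVForm} {φ : MDVForm} (h : ND Γ φ) (hsub : Γ ⊆ Δ) : ND Δ φ := by
  induction h generalizing Δ with
  | hyp hmem => exact ND.hyp (hsub hmem)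
  | andI _ _ ih1 ih2 => exact ND.andI (ih1 hsub) (ih2 hsub)
  | andE1 _ ih => exact ND.andE1 (ih hsub)
  | andE2 _ ih => exact ND.andE2 (ih hsub)
  | dne α _ ih => exact ND.dne α (ih hsub)
  | exfalso _ ih => exact ND.exfalso (ih hsub)
  | boxMon l hprem hinner ihprem _ => exact ND.boxMon l (fun χ hχ => ihprem χ hχ hsub) hinner
  | interBoxDia α _ ih => exact ND.interBoxDia α (ih hsub)
  | orI1 _ ih => exact ND.orI1 (ih hsub)
  | orI2 _ ih => exact ND.orI2 (ih hsub)
  | orE _ _ _ ih ih1 ih2 =>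
    exact ND.orE (ih hsub) (ih1 (Set.insert_subset_insert hsub))
      (ih2 (Set.insert_subset_insert hsub))
  | distrTensorOr _ ih => exact ND.distrTensorOr (ih hsub)
  | distrDiaOr _ ih => exact ND.distrDiaOr (ih hsub)
  | distrBoxOr _ ih => exact ND.distrBoxOr (ih hsub)
  | tensorI ψ _ ih => exact ND.tensorI ψ (ih hsub)
  | tensorE α _ _ _ ih ih1 ih2 =>
    exact ND.tensorE α (ih hsub) (ih1 (Set.insert_subset_insert hsub))
      (ih2 (Set.insert_subset_insert hsub))
  | tensorSub _ _ ih ih1 =>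
    exact ND.tensorSub (ih hsub) (ih1 (Set.insert_subset_insert hsub))
  | tensorComm _ ih => exact ND.tensorComm (ih hsub)
  | tensorAssoc _ ih => exact ND.tensorAssoc (ih hsub)
  | depI αs β _ ih => exact ND.depI αs β (ih hsub)
  | depE αs β _ ih => exact ND.depE αs β (ih hsub)
  | negI α _ ih => exact ND.negI α (ih (Set.insert_subset_insert hsub))
  | negE α _ _ ih1 ih2 => exact ND.negE α (ih1 hsub) (ih2 hsub)
  | diaMon _ hinner ih _ => exact ND.diaMon (ih hsub) hinner
  | interDiaBox α _ ih => exact ND.interDiaBox α (ih hsub)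

theorem insert_insert_sub {Δ Γ : Set MDVForm} {φ χ : MDVForm} (hsub : Δ ⊆ insert φ Γ) :
    insert χ Δ ⊆ insert φ (insert χ Γ) := by
  intro x hx
  rcases hx with rfl | hx
  · exact Set.mem_insert_iff.2 (Or.inr (Set.mem_insert _ _))
  · rcases hsub hx with rfl | h
    · exact Set.mem_insert _ _
    · exact Set.mem_insert_iff.2 (Or.inr (Set.mem_insert_iff.2 (Or.inr h)))

theorem ND.cutAux {Δ : Set MDVForm} {ψ : MDVForm} (h : ND Δ ψ) :
    ∀ {Γ : Set MDVForm} {φ : MDVForm}, Δ ⊆ insert φ Γ → ND Γ φ → ND Γ ψ := by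
  induction h with
  | hyp hmem =>
    intro Γ φ hsub hφ
    rcases hsub hmem with rfl | hm
    · exact hφ
    · exact ND.hyp hm
  | andI _ _ ih1 ih2 => intro Γ φ hsub hφ; exact ND.andI (ih1 hsub hφ) (ih2 hsub hφ)
  | andE1 _ ih => intro Γ φ hsub hφ; exact ND.andE1 (ih hsub hφ)
  | andE2 _ ih => intro Γ φ hsub hφ; exact ND.andE2 (ih hsub hφ)
  | dne α _ ih => intro Γ φ hsub hφ; exact ND.dne α (ih hsub hφ)
  | exfalso _ ih => intro Γ φ hsub hφ; exact ND.exfalso (ih hsub hφ)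
  | boxMon l hprem hinner ihprem _ =>
    intro Γ φ hsub hφ
    exact ND.boxMon l (fun χ hχ => ihprem χ hχ hsub hφ) hinner
  | interBoxDia α _ ih => intro Γ φ hsub hφ; exact ND.interBoxDia α (ih hsub hφ)
  | orI1 _ ih => intro Γ φ hsub hφ; exact ND.orI1 (ih hsub hφ)
  | orI2 _ ih => intro Γ φ hsub hφ; exact ND.orI2 (ih hsub hφ)
  | orE _ _ _ ih ih1 ih2 =>
    intro Γ φ hsub hφ
    exact ND.orE (ih hsub hφ)
      (ih1 (insert_insert_sub hsub) (hφ.weak (Set.subset_insert _ _)))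
      (ih2 (insert_insert_sub hsub) (hφ.weak (Set.subset_insert _ _)))
  | distrTensorOr _ ih => intro Γ φ hsub hφ; exact ND.distrTensorOr (ih hsub hφ)
  | distrDiaOr _ ih => intro Γ φ hsub hφ; exact ND.distrDiaOr (ih hsub hφ)
  | distrBoxOr _ ih => intro Γ φ hsub hφ; exact ND.distrBoxOr (ih hsub hφ)
  | tensorI ψ _ ih => intro Γ φ hsub hφ; exact ND.tensorI ψ (ih hsub hφ)
  | tensorE α _ _ _ ih ih1 ih2 =>
    intro Γ φ hsub hφ
    exact ND.tensorE α (ih hsub hφ)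
      (ih1 (insert_insert_sub hsub) (hφ.weak (Set.subset_insert _ _)))
      (ih2 (insert_insert_sub hsub) (hφ.weak (Set.subset_insert _ _)))
  | tensorSub _ _ ih ih1 =>
    intro Γ φ hsub hφ
    exact ND.tensorSub (ih hsub hφ)
      (ih1 (insert_insert_sub hsub) (hφ.weak (Set.subset_insert _ _)))
  | tensorComm _ ih => intro Γ φ hsub hφ; exact ND.tensorComm (ih hsub hφ)
  | tensorAssoc _ ih => intro Γ φ hsub hφ; exact ND.tensorAssoc (ih hsub hφ)
  | depI αs β _ ih => intro Γ φ hsub hφ; exact ND.depI αs β (ih hsub hφ)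
  | depE αs β _ ih => intro Γ φ hsub hφ; exact ND.depE αs β (ih hsub hφ)
  | negI α _ ih =>
    intro Γ φ hsub hφ
    exact ND.negI α (ih (insert_insert_sub hsub) (hφ.weak (Set.subset_insert _ _)))
  | negE α _ _ ih1 ih2 => intro Γ φ hsub hφ; exact ND.negE α (ih1 hsub hφ) (ih2 hsub hφ)
  | diaMon _ hinner ih _ => intro Γ φ hsub hφ; exact ND.diaMon (ih hsub hφ) hinner
  | interDiaBox α _ ih => intro Γ φ hsub hφ; exact ND.interDiaBox α (ih hsub hφ)

theorem ND.cut {Γ : Set MDVForm} {φ ψ : MDVForm} (h1 : ND Γ φ) (h2 : ND (insert φ Γ) ψ) :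
    ND Γ ψ := ND.cutAux h2 (fun _ hx => hx) h1

theorem ND.seq {Γ : Set MDVForm} {ψ χ : MDVForm} (h1 : ND Γ ψ) (h2 : ND {ψ} χ) : ND Γ χ :=
  ND.cut h1 (h2.weak (fun x hx => by rcases hx with rfl; exact Set.mem_insert _ _))

theorem ND.id (φ : MDVForm) : ND {φ} φ := ND.hyp rfl

/- ===================== Derived monotonicity rules ===================== -/

theorem setOfList_singleton (φ : MDVForm) : {χ | χ ∈ [φ]} = ({φ} : Set MDVForm) := by
  ext x; simp

theorem ND.boxMon1 {φ ψ : MDVForm} (h : ND {φ} ψ) : ND {MDVForm.box φ} (.box ψ) := by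
  refine ND.boxMon [φ] ?_ ?_
  · intro χ hχ
    have : χ = φ := by simpa using hχ
    subst this
    exact ND.id _
  · rw [setOfList_singleton]; exact h

theorem ND.diaMon1 {φ ψ : MDVForm} (h : ND {φ} ψ) : ND {MDVForm.dia φ} (.dia ψ) :=
  ND.diaMon (ND.id _) h

theorem ND.singleton_sub_insert {φ : MDVForm} {Γ : Set MDVForm} :
    ({φ} : Set MDVForm) ⊆ insert φ Γ := by
  intro x hx; rcases hx with rfl; exact Set.mem_insert _ _

theorem ND.orMon {φ ψ φ' ψ' : MDVForm} (h1 : ND {φ} φ') (h2 : ND {ψ} ψ') :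
    ND {φ.or ψ} (φ'.or ψ') :=
  ND.orE (ND.id _) ((ND.orI1 h1).weak ND.singleton_sub_insert)
    ((ND.orI2 h2).weak ND.singleton_sub_insert)

theorem ND.andMon {φ ψ φ' ψ' : MDVForm} (h1 : ND {φ} φ') (h2 : ND {ψ} ψ') :
    ND {φ.and ψ} (φ'.and ψ') :=
  ND.andI ((ND.andE1 (ND.id _)).seq h1) ((ND.andE2 (ND.id _)).seq h2)

theorem ND.tensorMon {φ ψ φ' ψ' : MDVForm} (h1 : ND {φ} φ') (h2 : ND {ψ} ψ') :
    ND {φ.tensor ψ} (φ'.tensor ψ') := by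
  have s1 : ND {φ.tensor ψ} (φ.tensor ψ') :=
    ND.tensorSub (ND.id _) (h2.weak ND.singleton_sub_insert)
  have s2 : ND {φ.tensor ψ} (ψ'.tensor φ) := ND.tensorComm s1
  have s3 : ND {φ.tensor ψ} (ψ'.tensor φ') :=
    ND.tensorSub s2 (h1.weak ND.singleton_sub_insert)
  exact ND.tensorComm s3

/- ===================== bigOr machinery ===================== -/

theorem ND.bigOr_of_mem : ∀ {l : List MDVForm} {φ : MDVForm}, φ ∈ l → ND {φ} (bigOr l)
  | [], φ, h => absurd h (by simp)
  | [a], φ, h => by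
    have : φ = a := by simpa using h
    subst this
    exact ND.id _
  | a :: b :: t, φ, h => by
    show ND {φ} (MDVForm.or a (bigOr (b :: t)))
    rcases List.mem_cons.1 h with rfl | h
    · exact ND.orI1 (ND.id _)
    · exact ND.orI2 (ND.bigOr_of_mem h)

theorem ND.bigOrI {Γ : Set MDVForm} {l : List MDVForm} {φ : MDVForm}
    (hm : φ ∈ l) (h : ND Γ φ) : ND Γ (bigOr l) := h.seq (ND.bigOr_of_mem hm)

theorem ND.bigOrE : ∀ (l : List MDVForm) (Γ : Set MDVForm) (χ : MDVForm), l ≠ [] →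
    ND Γ (bigOr l) → (∀ φ ∈ l, ND (insert φ Γ) χ) → ND Γ χ
  | [], _, _, h, _, _ => absurd rfl h
  | [a], Γ, χ, _, h, hb => ND.cut h (hb a (by simp))
  | a :: b :: t, Γ, χ, _, h, hb => by
    refine ND.orE h (hb a (by simp)) ?_
    refine ND.bigOrE (b :: t) (insert (bigOr (b :: t)) Γ) χ (by simp) (ND.hyp (Set.mem_insert _ _)) ?_
    intro φ hφ
    exact (hb φ (by simp [hφ])).weak (Set.insert_subset_insert (Set.subset_insert _ _))

theorem ND.bigOr_mono {l l' : List MDVForm} (hl : l ≠ [])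
    (h : ∀ φ ∈ l, ND {φ} (bigOr l')) : ND {bigOr l} (bigOr l') :=
  ND.bigOrE l _ _ hl (ND.id _) (fun φ hφ => (h φ hφ).weak ND.singleton_sub_insert)

/- ===================== provable equivalence ===================== -/

def NDeq (φ ψ : MDVForm) : Prop := ND {φ} ψ ∧ ND {ψ} φ

theorem NDeq.refl (φ : MDVForm) : NDeq φ φ := ⟨ND.id _, ND.id _⟩

theorem NDeq.symm {φ ψ : MDVForm} (h : NDeq φ ψ) : NDeq ψ φ := ⟨h.2, h.1⟩

theorem NDeq.trans {φ ψ χ : MDVForm} (h1 : NDeq φ ψ) (h2 : NDeq ψ χ) : NDeq φ χ :=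
  ⟨h1.1.seq h2.1, h2.2.seq h1.2⟩

theorem NDeq.and {φ ψ φ' ψ' : MDVForm} (h1 : NDeq φ φ') (h2 : NDeq ψ ψ') :
    NDeq (φ.and ψ) (φ'.and ψ') := ⟨ND.andMon h1.1 h2.1, ND.andMon h1.2 h2.2⟩

theorem NDeq.or {φ ψ φ' ψ' : MDVForm} (h1 : NDeq φ φ') (h2 : NDeq ψ ψ') :
    NDeq (φ.or ψ) (φ'.or ψ') := ⟨ND.orMon h1.1 h2.1, ND.orMon h1.2 h2.2⟩

theorem NDeq.tensor {φ ψ φ' ψ' : MDVForm} (h1 : NDeq φ φ') (h2 : NDeq ψ ψ') :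
    NDeq (φ.tensor ψ) (φ'.tensor ψ') := ⟨ND.tensorMon h1.1 h2.1, ND.tensorMon h1.2 h2.2⟩

theorem NDeq.box {φ ψ : MDVForm} (h : NDeq φ ψ) : NDeq (MDVForm.box φ) (.box ψ) :=
  ⟨ND.boxMon1 h.1, ND.boxMon1 h.2⟩

theorem NDeq.dia {φ ψ : MDVForm} (h : NDeq φ ψ) : NDeq (MDVForm.dia φ) (.dia ψ) :=
  ⟨ND.diaMon1 h.1, ND.diaMon1 h.2⟩
/- ===================== syntactic distribution over bigOr ===================== -/

def listPairs {α β γ : Type} (f : α → β → γ) (A : List α) (B : List β) : List γ :=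
  A.flatMap fun a => B.map (f a)

theorem listPairs_ne_nil {α β γ : Type} (f : α → β → γ) {A : List α} {B : List β}
    (hA : A ≠ []) (hB : B ≠ []) : listPairs f A B ≠ [] := by
  rcases A with _ | ⟨a, A⟩
  · exact absurd rfl hA
  · rcases B with _ | ⟨b, B⟩
    · exact absurd rfl hB
    · simp [listPairs]

theorem mem_listPairs {α β γ : Type} {f : α → β → γ} {A : List α} {B : List β} {x : γ}
    (h : x ∈ listPairs f A B) : ∃ a ∈ A, ∃ b ∈ B, x = f a b := by
  simp only [listPairs, List.mem_flatMap, List.mem_map] at h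
  rcases h with ⟨a, ha, b, hb, rfl⟩
  exact ⟨a, ha, b, hb, rfl⟩

theorem listPairs_mem {α β γ : Type} {f : α → β → γ} {A : List α} {B : List β} {a : α} {b : β}
    (ha : a ∈ A) (hb : b ∈ B) : f a b ∈ listPairs f A B := by
  simp only [listPairs, List.mem_flatMap, List.mem_map]
  exact ⟨a, ha, b, hb, rfl⟩

theorem NDeq.orBigOr {A B : List MDVForm} (hA : A ≠ []) (hB : B ≠ []) :
    NDeq ((bigOr A).or (bigOr B)) (bigOr (A ++ B)) := by
  constructor
  · refine ND.orE (ND.id _) ?_ ?_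
    · exact (ND.bigOr_mono hA fun φ hφ =>
        ND.bigOr_of_mem (List.mem_append.2 (Or.inl hφ))).weak ND.singleton_sub_insert
    · exact (ND.bigOr_mono hB fun φ hφ =>
        ND.bigOr_of_mem (List.mem_append.2 (Or.inr hφ))).weak ND.singleton_sub_insert
  · refine ND.bigOrE _ _ _ (by simp [hA]) (ND.id _) ?_
    intro φ hφ
    rcases List.mem_append.1 hφ with hφ | hφ
    · exact ND.orI1 (ND.bigOrI hφ (ND.hyp (Set.mem_insert _ _)))
    · exact ND.orI2 (ND.bigOrI hφ (ND.hyp (Set.mem_insert _ _)))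

theorem NDeq.andBigOr {A B : List MDVForm} (hA : A ≠ []) (hB : B ≠ []) :
    NDeq ((bigOr A).and (bigOr B)) (bigOr (listPairs MDVForm.and A B)) := by
  constructor
  · refine ND.bigOrE A _ _ hA (ND.andE1 (ND.id _)) ?_
    intro a ha
    refine ND.bigOrE B _ _ hB (ND.andE2 (ND.hyp (Set.mem_insert_iff.2 (Or.inr rfl)))) ?_
    intro b hb
    refine ND.bigOrI (listPairs_mem ha hb) (ND.andI ?_ ?_)
    · exact ND.hyp (Set.mem_insert_iff.2 (Or.inr (Set.mem_insert _ _)))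
    · exact ND.hyp (Set.mem_insert _ _)
  · refine ND.bigOrE _ _ _ (listPairs_ne_nil _ hA hB) (ND.id _) ?_
    intro φ hφ
    rcases mem_listPairs hφ with ⟨a, ha, b, hb, rfl⟩
    exact ND.andI (ND.bigOrI ha (ND.andE1 (ND.hyp (Set.mem_insert _ _))))
      (ND.bigOrI hb (ND.andE2 (ND.hyp (Set.mem_insert _ _))))

theorem ND.tensorBigOrR (φ : MDVForm) : ∀ (B : List MDVForm), B ≠ [] →
    ND {φ.tensor (bigOr B)} (bigOr (B.map (φ.tensor ·)))
  | [], h => absurd rfl h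
  | [b], _ => ND.id _
  | b :: c :: t, _ => by
    have step : ND {φ.tensor (bigOr (b :: c :: t))}
        ((φ.tensor b).or (φ.tensor (bigOr (c :: t)))) := ND.distrTensorOr (ND.id _)
    refine step.seq (ND.orMon (ND.id _) ?_)
    exact ND.tensorBigOrR φ (c :: t) (by simp)

theorem NDeq.tensorBigOr {A B : List MDVForm} (hA : A ≠ []) (hB : B ≠ []) :
    NDeq ((bigOr A).tensor (bigOr B)) (bigOr (listPairs MDVForm.tensor A B)) := by
  constructor
  · have s1 : ND {(bigOr A).tensor (bigOr B)} (bigOr (A.map ((bigOr B).tensor ·))) :=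
      (ND.tensorComm (ND.id _)).seq (ND.tensorBigOrR (bigOr B) A hA)
    refine s1.seq (ND.bigOr_mono (by simp [hA]) ?_)
    intro χ hχ
    rcases List.mem_map.1 hχ with ⟨a, ha, rfl⟩
    have s2 : ND {(bigOr B).tensor a} (bigOr (B.map (a.tensor ·))) :=
      (ND.tensorComm (ND.id _)).seq (ND.tensorBigOrR a B hB)
    refine s2.seq (ND.bigOr_mono (by simp [hB]) ?_)
    intro x hx
    rcases List.mem_map.1 hx with ⟨b, hb, rfl⟩
    exact ND.bigOr_of_mem (listPairs_mem ha hb)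
  · refine ND.bigOrE _ _ _ (listPairs_ne_nil _ hA hB) (ND.id _) ?_
    intro χ hχ
    rcases mem_listPairs hχ with ⟨a, ha, b, hb, rfl⟩
    have s1 : ND (insert (a.tensor b) {bigOr (listPairs MDVForm.tensor A B)})
        (a.tensor (bigOr B)) :=
      ND.tensorSub (ND.hyp (Set.mem_insert _ _))
        ((ND.bigOr_of_mem hb).weak ND.singleton_sub_insert)
    have s2 := ND.tensorComm s1
    have s3 := ND.tensorSub s2 ((ND.bigOr_of_mem ha).weak ND.singleton_sub_insert)
    exact ND.tensorComm s3

theorem ND.boxBigOr1 : ∀ (A : List MDVForm), A ≠ [] →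
    ND {MDVForm.box (bigOr A)} (bigOr (A.map MDVForm.box))
  | [], h => absurd rfl h
  | [a], _ => ND.id _
  | a :: b :: t, _ => by
    have step : ND {MDVForm.box (bigOr (a :: b :: t))}
        ((MDVForm.box a).or (.box (bigOr (b :: t)))) := ND.distrBoxOr (ND.id _)
    exact step.seq (ND.orMon (ND.id _) (ND.boxBigOr1 (b :: t) (by simp)))

theorem NDeq.boxBigOr {A : List MDVForm} (hA : A ≠ []) :
    NDeq (MDVForm.box (bigOr A)) (bigOr (A.map MDVForm.box)) := by
  constructor
  · exact ND.boxBigOr1 A hA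
  · refine ND.bigOrE _ _ _ (by simp [hA]) (ND.id _) ?_
    intro χ hχ
    rcases List.mem_map.1 hχ with ⟨a, ha, rfl⟩
    exact (ND.hyp (Set.mem_insert _ _)).seq (ND.boxMon1 (ND.bigOr_of_mem ha))

theorem ND.diaBigOr1 : ∀ (A : List MDVForm), A ≠ [] →
    ND {MDVForm.dia (bigOr A)} (bigOr (A.map MDVForm.dia))
  | [], h => absurd rfl h
  | [a], _ => ND.id _
  | a :: b :: t, _ => by
    have step : ND {MDVForm.dia (bigOr (a :: b :: t))}
        ((MDVForm.dia a).or (.dia (bigOr (b :: t)))) := ND.distrDiaOr (ND.id _)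
    exact step.seq (ND.orMon (ND.id _) (ND.diaBigOr1 (b :: t) (by simp)))

theorem NDeq.diaBigOr {A : List MDVForm} (hA : A ≠ []) :
    NDeq (MDVForm.dia (bigOr A)) (bigOr (A.map MDVForm.dia)) := by
  constructor
  · exact ND.diaBigOr1 A hA
  · refine ND.bigOrE _ _ _ (by simp [hA]) (ND.id _) ?_
    intro χ hχ
    rcases List.mem_map.1 hχ with ⟨a, ha, rfl⟩
    exact (ND.hyp (Set.mem_insert _ _)).seq (ND.diaMon1 (ND.bigOr_of_mem ha))

/- ===================== normal form ===================== -/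

def NF0 : MDVForm → List CForm
  | .var p => [.var p]
  | .bot => [.bot]
  | .cneg α => [.neg α]
  | .dep _ _ => [.bot]
  | .and φ ψ => listPairs CForm.and (NF0 φ) (NF0 ψ)
  | .tensor φ ψ => listPairs CForm.tensor (NF0 φ) (NF0 ψ)
  | .or φ ψ => NF0 φ ++ NF0 ψ
  | .box φ => (NF0 φ).map .box
  | .dia φ => (NF0 φ).map .dia

def NF : MDVForm → List CForm
  | .var p => [.var p]
  | .bot => [.bot]
  | .cneg α => [.neg α]
  | .dep αs β => NF0 (depTensor αs β)
  | .and φ ψ => listPairs CForm.and (NF φ) (NF ψ)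
  | .tensor φ ψ => listPairs CForm.tensor (NF φ) (NF ψ)
  | .or φ ψ => NF φ ++ NF ψ
  | .box φ => (NF φ).map .box
  | .dia φ => (NF φ).map .dia

def DepFree : MDVForm → Prop
  | .var _ => True
  | .bot => True
  | .cneg _ => True
  | .dep _ _ => False
  | .and φ ψ => DepFree φ ∧ DepFree ψ
  | .tensor φ ψ => DepFree φ ∧ DepFree ψ
  | .or φ ψ => DepFree φ ∧ DepFree ψ
  | .box φ => DepFree φ
  | .dia φ => DepFree φ

theorem NF0_ne_nil : ∀ (φ : MDVForm), NF0 φ ≠ []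
  | .var p => by simp [NF0]
  | .bot => by simp [NF0]
  | .cneg α => by simp [NF0]
  | .dep αs β => by simp [NF0]
  | .and φ ψ => listPairs_ne_nil _ (NF0_ne_nil φ) (NF0_ne_nil ψ)
  | .tensor φ ψ => listPairs_ne_nil _ (NF0_ne_nil φ) (NF0_ne_nil ψ)
  | .or φ ψ => by simp [NF0, NF0_ne_nil φ]
  | .box φ => by simp [NF0, NF0_ne_nil φ]
  | .dia φ => by simp [NF0, NF0_ne_nil φ]

theorem NF_ne_nil : ∀ (φ : MDVForm), NF φ ≠ []
  | .var p => by simp [NF]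
  | .bot => by simp [NF]
  | .cneg α => by simp [NF]
  | .dep αs β => NF0_ne_nil _
  | .and φ ψ => listPairs_ne_nil _ (NF_ne_nil φ) (NF_ne_nil ψ)
  | .tensor φ ψ => listPairs_ne_nil _ (NF_ne_nil φ) (NF_ne_nil ψ)
  | .or φ ψ => by simp [NF, NF_ne_nil φ]
  | .box φ => by simp [NF, NF_ne_nil φ]
  | .dia φ => by simp [NF, NF_ne_nil φ]

theorem map_toMDV_listPairs (f : CForm → CForm → CForm) (g : MDVForm → MDVForm → MDVForm)
    (hfg : ∀ a b, (f a b).toMDV = g a.toMDV b.toMDV) (A B : List CForm) :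
    (listPairs f A B).map CForm.toMDV =
      listPairs g (A.map CForm.toMDV) (B.map CForm.toMDV) := by
  induction A with
  | nil => rfl
  | cons a A ih =>
    show ((B.map (f a)) ++ listPairs f A B).map CForm.toMDV = _
    rw [List.map_append, ih]
    show _ = ((B.map CForm.toMDV).map (g a.toMDV)) ++ _
    rw [List.map_map, List.map_map]
    congr 1
    apply List.map_congr_left
    intro b _
    exact hfg a b

/- ===================== depFree facts ===================== -/

theorem depFree_toMDV : ∀ (α : CForm), DepFree α.toMDV
  | .var p => trivial
  | .bot => trivial
  | .neg α => trivial
  | .and α β => ⟨depFree_toMDV α, depFree_toMDV β⟩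
  | .tensor α β => ⟨depFree_toMDV α, depFree_toMDV β⟩
  | .box α => depFree_toMDV α
  | .dia α => depFree_toMDV α

theorem depFree_signed (b : Bool) (α : CForm) : DepFree (signed b α) := by
  rcases b with _ | _
  · simp [signed]; trivial
  · simp [signed]; exact depFree_toMDV α

theorem depFree_bigAnd : ∀ (l : List MDVForm), (∀ φ ∈ l, DepFree φ) → DepFree (bigAnd l)
  | [], _ => trivial
  | [φ], h => h φ (by simp)
  | φ :: ψ :: t, h =>
    ⟨h φ (by simp), depFree_bigAnd (ψ :: t) (fun χ hχ => h χ (by simp [hχ]))⟩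

theorem depFree_bigTensor : ∀ (l : List MDVForm), (∀ φ ∈ l, DepFree φ) → DepFree (bigTensor l)
  | [], _ => trivial
  | [φ], h => h φ (by simp)
  | φ :: ψ :: t, h =>
    ⟨h φ (by simp), depFree_bigTensor (ψ :: t) (fun χ hχ => h χ (by simp [hχ]))⟩

theorem depFree_depRow (αs : List CForm) (β : CForm) (v : List Bool) :
    DepFree (depRow αs β v) := by
  apply depFree_bigAnd
  intro φ hφ
  rcases List.mem_append.1 hφ with hφ | hφ
  · rcases List.mem_iff_get.1 (hφ) with ⟨i, rfl⟩
    rw [List.get_eq_getElem, List.getElem_zipWith]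
    exact depFree_signed _ _
  · have : φ = MDVForm.or β.toMDV (.cneg β) := by simpa using hφ
    subst this
    exact ⟨depFree_toMDV β, trivial⟩

theorem depFree_depTensor (αs : List CForm) (β : CForm) : DepFree (depTensor αs β) := by
  apply depFree_bigTensor
  intro φ hφ
  rcases List.mem_map.1 hφ with ⟨v, _, rfl⟩
  exact depFree_depRow αs β v

/- ===================== the normal form theorem ===================== -/

theorem NF0_equiv : ∀ (φ : MDVForm), DepFree φ →
    NDeq φ (bigOr ((NF0 φ).map CForm.toMDV))
  | .var p, _ => NDeq.refl _
  | .bot, _ => NDeq.refl _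
  | .cneg α, _ => NDeq.refl _
  | .dep αs β, h => absurd h (by simp [DepFree])
  | .and φ ψ, h => by
    have e := (NF0_equiv φ h.1).and (NF0_equiv ψ h.2)
    refine e.trans ((NDeq.andBigOr (by simp [NF0_ne_nil φ]) (by simp [NF0_ne_nil ψ])).trans ?_)
    rw [← map_toMDV_listPairs CForm.and MDVForm.and (fun _ _ => rfl)]
    exact NDeq.refl _
  | .tensor φ ψ, h => by
    have e := (NF0_equiv φ h.1).tensor (NF0_equiv ψ h.2)
    refine e.trans ((NDeq.tensorBigOr (by simp [NF0_ne_nil φ]) (by simp [NF0_ne_nil ψ])).trans ?_)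
    rw [← map_toMDV_listPairs CForm.tensor MDVForm.tensor (fun _ _ => rfl)]
    exact NDeq.refl _
  | .or φ ψ, h => by
    have e := (NF0_equiv φ h.1).or (NF0_equiv ψ h.2)
    refine e.trans ((NDeq.orBigOr (by simp [NF0_ne_nil φ]) (by simp [NF0_ne_nil ψ])).trans ?_)
    rw [show (NF0 (φ.or ψ)).map CForm.toMDV = (NF0 φ).map CForm.toMDV ++ (NF0 ψ).map CForm.toMDV
      from by simp [NF0]]
    exact NDeq.refl _
  | .box φ, h => by
    have e := (NF0_equiv φ h).box
    refine e.trans ((NDeq.boxBigOr (by simp [NF0_ne_nil φ])).trans ?_)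
    rw [show (NF0 (MDVForm.box φ)).map CForm.toMDV = ((NF0 φ).map CForm.toMDV).map MDVForm.box
      from by simp [NF0, List.map_map]; exact fun a _ => rfl]
    exact NDeq.refl _
  | .dia φ, h => by
    have e := (NF0_equiv φ h).dia
    refine e.trans ((NDeq.diaBigOr (by simp [NF0_ne_nil φ])).trans ?_)
    rw [show (NF0 (MDVForm.dia φ)).map CForm.toMDV = ((NF0 φ).map CForm.toMDV).map MDVForm.dia
      from by simp [NF0, List.map_map]; exact fun a _ => rfl]
    exact NDeq.refl _

theorem NF_equiv : ∀ (φ : MDVForm), NDeq φ (bigOr ((NF φ).map CForm.toMDV))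
  | .var p => NDeq.refl _
  | .bot => NDeq.refl _
  | .cneg α => NDeq.refl _
  | .dep αs β => by
    have e1 : NDeq (MDVForm.dep αs β) (depTensor αs β) :=
      ⟨ND.depE αs β (ND.id _), ND.depI αs β (ND.id _)⟩
    exact e1.trans (NF0_equiv (depTensor αs β) (depFree_depTensor αs β))
  | .and φ ψ => by
    have e := (NF_equiv φ).and (NF_equiv ψ)
    refine e.trans ((NDeq.andBigOr (by simp [NF_ne_nil φ]) (by simp [NF_ne_nil ψ])).trans ?_)
    rw [← map_toMDV_listPairs CForm.and MDVForm.and (fun _ _ => rfl)]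
    exact NDeq.refl _
  | .tensor φ ψ => by
    have e := (NF_equiv φ).tensor (NF_equiv ψ)
    refine e.trans ((NDeq.tensorBigOr (by simp [NF_ne_nil φ]) (by simp [NF_ne_nil ψ])).trans ?_)
    rw [← map_toMDV_listPairs CForm.tensor MDVForm.tensor (fun _ _ => rfl)]
    exact NDeq.refl _
  | .or φ ψ => by
    have e := (NF_equiv φ).or (NF_equiv ψ)
    refine e.trans ((NDeq.orBigOr (by simp [NF_ne_nil φ]) (by simp [NF_ne_nil ψ])).trans ?_)
    rw [show (NF (φ.or ψ)).map CForm.toMDV = (NF φ).map CForm.toMDV ++ (NF ψ).map CForm.toMDV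
      from by simp [NF]]
    exact NDeq.refl _
  | .box φ => by
    have e := (NF_equiv φ).box
    refine e.trans ((NDeq.boxBigOr (by simp [NF_ne_nil φ])).trans ?_)
    rw [show (NF (MDVForm.box φ)).map CForm.toMDV = ((NF φ).map CForm.toMDV).map MDVForm.box
      from by simp [NF, List.map_map]; exact fun a _ => rfl]
    exact NDeq.refl _
  | .dia φ => by
    have e := (NF_equiv φ).dia
    refine e.trans ((NDeq.diaBigOr (by simp [NF_ne_nil φ])).trans ?_)
    rw [show (NF (MDVForm.dia φ)).map CForm.toMDV = ((NF φ).map CForm.toMDV).map MDVForm.dia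
      from by simp [NF, List.map_map]; exact fun a _ => rfl]
    exact NDeq.refl _
/- ===================== compactness of ND ===================== -/

theorem diff_sub_of_sub_insert {Δ Γ : Set MDVForm} {φ : MDVForm} (h : Δ ⊆ insert φ Γ) :
    Δ \ {φ} ⊆ Γ := by
  intro x hx
  rcases h hx.1 with rfl | hm
  · exact absurd rfl hx.2
  · exact hm

theorem sub_insert_diff {Δ : Set MDVForm} {φ : MDVForm} : Δ ⊆ insert φ (Δ \ {φ}) := by
  intro x hx
  by_cases hxφ : x = φ
  · exact hxφ ▸ Set.mem_insert _ _
  · exact Set.mem_insert_iff.2 (Or.inr ⟨hx, hxφ⟩)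

theorem ND.finite {Γ : Set MDVForm} {φ : MDVForm} (h : ND Γ φ) :
    ∃ Γ₀, Γ₀ ⊆ Γ ∧ Γ₀.Finite ∧ ND Γ₀ φ := by
  induction h with
  | hyp hmem => exact ⟨{_}, Set.singleton_subset_iff.2 hmem, Set.finite_singleton _, ND.hyp rfl⟩
  | andI h1 h2 ih1 ih2 =>
    rcases ih1 with ⟨Γ₁, hs1, hf1, hd1⟩
    rcases ih2 with ⟨Γ₂, hs2, hf2, hd2⟩
    exact ⟨Γ₁ ∪ Γ₂, Set.union_subset hs1 hs2, hf1.union hf2,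
      ND.andI (hd1.weak Set.subset_union_left) (hd2.weak Set.subset_union_right)⟩
  | andE1 h ih => rcases ih with ⟨Γ₀, hs, hf, hd⟩; exact ⟨Γ₀, hs, hf, ND.andE1 hd⟩
  | andE2 h ih => rcases ih with ⟨Γ₀, hs, hf, hd⟩; exact ⟨Γ₀, hs, hf, ND.andE2 hd⟩
  | dne α h ih => rcases ih with ⟨Γ₀, hs, hf, hd⟩; exact ⟨Γ₀, hs, hf, ND.dne α hd⟩
  | exfalso h ih => rcases ih with ⟨Γ₀, hs, hf, hd⟩; exact ⟨Γ₀, hs, hf, ND.exfalso hd⟩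
  | boxMon l hprem hinner ihprem _ =>
    choose f hf1 hf2 hf3 using ihprem
    classical
    let F : MDVForm → Set MDVForm := fun χ => if h : χ ∈ l then f χ h else ∅
    refine ⟨⋃ χ ∈ {x | x ∈ l}, F χ, ?_, ?_, ?_⟩
    · intro x hx
      simp only [Set.mem_iUnion] at hx
      rcases hx with ⟨χ, hχ, hx⟩
      rw [show F χ = f χ hχ from dif_pos hχ] at hx
      exact hf1 χ hχ hx
    · refine Set.Finite.biUnion (List.finite_toSet l) ?_
      intro χ hχ
      rw [show F χ = f χ hχ from dif_pos hχ]
      exact hf2 χ hχ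
    · refine ND.boxMon l ?_ hinner
      intro χ hχ
      refine (hf3 χ hχ).weak ?_
      intro x hx
      exact Set.mem_biUnion hχ (by rw [show F χ = f χ hχ from dif_pos hχ]; exact hx)
  | interBoxDia α h ih =>
    rcases ih with ⟨Γ₀, hs, hf, hd⟩; exact ⟨Γ₀, hs, hf, ND.interBoxDia α hd⟩
  | orI1 h ih => rcases ih with ⟨Γ₀, hs, hf, hd⟩; exact ⟨Γ₀, hs, hf, ND.orI1 hd⟩
  | orI2 h ih => rcases ih with ⟨Γ₀, hs, hf, hd⟩; exact ⟨Γ₀, hs, hf, ND.orI2 hd⟩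
  | orE h h1 h2 ih ih1 ih2 =>
    rcases ih with ⟨Γ₀, hs, hf, hd⟩
    rcases ih1 with ⟨Δ₁, hs1, hf1, hd1⟩
    rcases ih2 with ⟨Δ₂, hs2, hf2, hd2⟩
    refine ⟨Γ₀ ∪ (Δ₁ \ {_}) ∪ (Δ₂ \ {_}),
      Set.union_subset (Set.union_subset hs (diff_sub_of_sub_insert hs1))
        (diff_sub_of_sub_insert hs2),
      (hf.union hf1.diff).union hf2.diff, ?_⟩
    refine ND.orE (hd.weak (Set.subset_union_left.trans Set.subset_union_left)) ?_ ?_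
    · exact (hd1.weak sub_insert_diff).weak (Set.insert_subset_insert
        (Set.subset_union_right.trans Set.subset_union_left))
    · exact (hd2.weak sub_insert_diff).weak (Set.insert_subset_insert Set.subset_union_right)
  | distrTensorOr h ih =>
    rcases ih with ⟨Γ₀, hs, hf, hd⟩; exact ⟨Γ₀, hs, hf, ND.distrTensorOr hd⟩
  | distrDiaOr h ih =>
    rcases ih with ⟨Γ₀, hs, hf, hd⟩; exact ⟨Γ₀, hs, hf, ND.distrDiaOr hd⟩
  | distrBoxOr h ih =>
    rcases ih with ⟨Γ₀, hs, hf, hd⟩; exact ⟨Γ₀, hs, hf, ND.distrBoxOr hd⟩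
  | tensorI ψ h ih => rcases ih with ⟨Γ₀, hs, hf, hd⟩; exact ⟨Γ₀, hs, hf, ND.tensorI ψ hd⟩
  | tensorE α h h1 h2 ih ih1 ih2 =>
    rcases ih with ⟨Γ₀, hs, hf, hd⟩
    rcases ih1 with ⟨Δ₁, hs1, hf1, hd1⟩
    rcases ih2 with ⟨Δ₂, hs2, hf2, hd2⟩
    refine ⟨Γ₀ ∪ (Δ₁ \ {_}) ∪ (Δ₂ \ {_}),
      Set.union_subset (Set.union_subset hs (diff_sub_of_sub_insert hs1))
        (diff_sub_of_sub_insert hs2),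
      (hf.union hf1.diff).union hf2.diff, ?_⟩
    refine ND.tensorE α (hd.weak (Set.subset_union_left.trans Set.subset_union_left)) ?_ ?_
    · exact (hd1.weak sub_insert_diff).weak (Set.insert_subset_insert
        (Set.subset_union_right.trans Set.subset_union_left))
    · exact (hd2.weak sub_insert_diff).weak (Set.insert_subset_insert Set.subset_union_right)
  | tensorSub h h1 ih ih1 =>
    rcases ih with ⟨Γ₀, hs, hf, hd⟩
    rcases ih1 with ⟨Δ₁, hs1, hf1, hd1⟩
    refine ⟨Γ₀ ∪ (Δ₁ \ {_}), Set.union_subset hs (diff_sub_of_sub_insert hs1),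
      hf.union hf1.diff, ?_⟩
    refine ND.tensorSub (hd.weak Set.subset_union_left) ?_
    exact (hd1.weak sub_insert_diff).weak (Set.insert_subset_insert Set.subset_union_right)
  | tensorComm h ih => rcases ih with ⟨Γ₀, hs, hf, hd⟩; exact ⟨Γ₀, hs, hf, ND.tensorComm hd⟩
  | tensorAssoc h ih => rcases ih with ⟨Γ₀, hs, hf, hd⟩; exact ⟨Γ₀, hs, hf, ND.tensorAssoc hd⟩
  | depI αs β h ih => rcases ih with ⟨Γ₀, hs, hf, hd⟩; exact ⟨Γ₀, hs, hf, ND.depI αs β hd⟩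
  | depE αs β h ih => rcases ih with ⟨Γ₀, hs, hf, hd⟩; exact ⟨Γ₀, hs, hf, ND.depE αs β hd⟩
  | negI α h ih =>
    rcases ih with ⟨Δ₁, hs1, hf1, hd1⟩
    refine ⟨Δ₁ \ {_}, diff_sub_of_sub_insert hs1, hf1.diff, ?_⟩
    exact ND.negI α (hd1.weak sub_insert_diff)
  | negE α h1 h2 ih1 ih2 =>
    rcases ih1 with ⟨Γ₁, hs1, hf1, hd1⟩
    rcases ih2 with ⟨Γ₂, hs2, hf2, hd2⟩
    exact ⟨Γ₁ ∪ Γ₂, Set.union_subset hs1 hs2, hf1.union hf2,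
      ND.negE α (hd1.weak Set.subset_union_left) (hd2.weak Set.subset_union_right)⟩
  | diaMon h hinner ih _ =>
    rcases ih with ⟨Γ₀, hs, hf, hd⟩; exact ⟨Γ₀, hs, hf, ND.diaMon hd hinner⟩
  | interDiaBox α h ih =>
    rcases ih with ⟨Γ₀, hs, hf, hd⟩; exact ⟨Γ₀, hs, hf, ND.interDiaBox α hd⟩
/- ===================== consistency and Lindenbaum ===================== -/

def cctx (T : Set CForm) : Set MDVForm := CForm.toMDV '' T

theorem cctx_insert (α : CForm) (T : Set CForm) :
    cctx (insert α T) = insert α.toMDV (cctx T) := Set.image_insert_eq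

theorem cctx_mono {T S : Set CForm} (h : T ⊆ S) : cctx T ⊆ cctx S :=
  Set.image_mono h

def ConsistentC (T : Set CForm) : Prop := ¬ ND (cctx T) MDVForm.bot

def MaxConsC (T : Set CForm) : Prop :=
  ConsistentC T ∧ ∀ α : CForm, α ∈ T ∨ CForm.neg α ∈ T

theorem ConsistentC.insert_or {T : Set CForm} (hT : ConsistentC T) (α : CForm) :
    ConsistentC (insert α T) ∨ ConsistentC (insert (CForm.neg α) T) := by
  by_contra hc
  push_neg at hc
  rcases hc with ⟨h1, h2⟩
  rw [ConsistentC, not_not, cctx_insert] at h1 h2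
  have d1 : ND (cctx T) (MDVForm.cneg α) := ND.negI α h1
  have d2 : ND (insert (MDVForm.cneg α) (cctx T)) MDVForm.bot := h2
  exact hT (ND.cut d1 d2)

theorem finite_subset_chain {c : Set (Set CForm)} (hchain : IsChain (· ⊆ ·) c)
    (hne : c.Nonempty) {Γ₀ : Set MDVForm} (hfin : Γ₀.Finite) :
    Γ₀ ⊆ cctx (⋃₀ c) → ∃ S ∈ c, Γ₀ ⊆ cctx S := by
  refine Set.Finite.induction_on
    (motive := fun Γ _ => Γ ⊆ cctx (⋃₀ c) → ∃ S ∈ c, Γ ⊆ cctx S) Γ₀ hfin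
    (fun _ => ⟨hne.some, hne.some_mem, Set.empty_subset _⟩)
    (fun {x} {Γ'} hx hΓ'fin ih hsub => ?_)
  rcases ih (fun y hy => hsub (Set.mem_insert_iff.2 (Or.inr hy))) with ⟨S₁, hS₁c, hS₁⟩
  have hxmem : x ∈ cctx (⋃₀ c) := hsub (Set.mem_insert _ _)
  rcases hxmem with ⟨γ, hγ, rfl⟩
  rcases hγ with ⟨S₂, hS₂c, hγS₂⟩
  rcases hchain.total hS₁c hS₂c with hss | hss
  · refine ⟨S₂, hS₂c, ?_⟩
    intro y hy
    rcases hy with rfl | hy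
    · exact ⟨γ, hγS₂, rfl⟩
    · exact cctx_mono hss (hS₁ hy)
  · refine ⟨S₁, hS₁c, ?_⟩
    intro y hy
    rcases hy with rfl | hy
    · exact ⟨γ, hss hγS₂, rfl⟩
    · exact hS₁ hy

theorem lindenbaum {T : Set CForm} (hT : ConsistentC T) :
    ∃ T', T ⊆ T' ∧ MaxConsC T' := by
  have hz := zorn_subset_nonempty {S : Set CForm | ConsistentC S} ?_ T hT
  · rcases hz with ⟨m, hsub, hmax⟩
    refine ⟨m, hsub, hmax.1, ?_⟩
    intro α
    rcases hmax.1.insert_or α with h | h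
    · exact Or.inl (hmax.2 h (Set.subset_insert _ _) (Set.mem_insert _ _))
    · exact Or.inr (hmax.2 h (Set.subset_insert _ _) (Set.mem_insert _ _))
  · intro c hcS hchain hcne
    refine ⟨⋃₀ c, ?_, fun S hS => Set.subset_sUnion_of_mem hS⟩
    intro hbot
    rcases ND.finite hbot with ⟨Γ₀, hΓsub, hΓfin, hΓd⟩
    rcases finite_subset_chain hchain hcne hΓfin hΓsub with ⟨S, hSc, hsub⟩
    exact (hcS hSc) (hΓd.weak hsub)

/- ===================== MCS properties ===================== -/

namespace MaxConsC

variable {T : Set CForm} (hT : MaxConsC T)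

theorem hyp_of_mem {α : CForm} (h : α ∈ T) : ND (cctx T) α.toMDV := ND.hyp ⟨α, h, rfl⟩

theorem not_both (hT : MaxConsC T) {α : CForm} (h1 : α ∈ T) (h2 : CForm.neg α ∈ T) : False :=
  hT.1 (ND.negE α (hyp_of_mem h1) (hyp_of_mem h2))

theorem mem_of_derive (hT : MaxConsC T) {α : CForm} (h : ND (cctx T) α.toMDV) : α ∈ T := by
  rcases hT.2 α with hm | hm
  · exact hm
  · exact absurd (ND.negE α h (hyp_of_mem hm)) hT.1

theorem neg_mem_iff (hT : MaxConsC T) {α : CForm} : CForm.neg α ∈ T ↔ α ∉ T := by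
  constructor
  · intro h hα; exact hT.not_both hα h
  · intro h; rcases hT.2 α with hm | hm
    · exact absurd hm h
    · exact hm

theorem bot_not_mem (hT : MaxConsC T) : CForm.bot ∉ T := fun h => hT.1 (hyp_of_mem h)

theorem and_mem_iff (hT : MaxConsC T) {α β : CForm} :
    CForm.and α β ∈ T ↔ α ∈ T ∧ β ∈ T := by
  constructor
  · intro h
    exact ⟨hT.mem_of_derive (ND.andE1 (hyp_of_mem h)),
      hT.mem_of_derive (ND.andE2 (hyp_of_mem h))⟩
  · intro ⟨h1, h2⟩
    exact hT.mem_of_derive (ND.andI (hyp_of_mem h1) (hyp_of_mem h2))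

theorem tensor_mem_iff (hT : MaxConsC T) {α β : CForm} :
    CForm.tensor α β ∈ T ↔ α ∈ T ∨ β ∈ T := by
  constructor
  · intro h
    by_contra hc
    push_neg at hc
    have hnα : CForm.neg α ∈ T := hT.neg_mem_iff.2 hc.1
    have hnβ : CForm.neg β ∈ T := hT.neg_mem_iff.2 hc.2
    have hten : ND (cctx T) (MDVForm.tensor α.toMDV β.toMDV) := hyp_of_mem h
    have hbot : ND (cctx T) (CForm.bot.toMDV) := by
      refine ND.tensorE CForm.bot hten ?_ ?_
      · exact ND.negE α (ND.hyp (Set.mem_insert _ _))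
          ((hyp_of_mem hnα).weak (Set.subset_insert _ _))
      · exact ND.negE β (ND.hyp (Set.mem_insert _ _))
          ((hyp_of_mem hnβ).weak (Set.subset_insert _ _))
    exact hT.1 hbot
  · intro h
    rcases h with h | h
    · exact hT.mem_of_derive (ND.tensorI _ (hyp_of_mem h))
    · exact hT.mem_of_derive (ND.tensorComm (ND.tensorI _ (hyp_of_mem h)))

end MaxConsC
/- ===================== singleton-team facts ===================== -/

theorem KModel.csat_singleton_tensor {M : KModel} {w : M.W} {α β : CForm} :
    M.csat {w} (.tensor α β) ↔ M.csat {w} α ∨ M.csat {w} β := by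
  constructor
  · rintro ⟨Y, Z, hYZ, hY, hZ⟩
    have hw : w ∈ Y ∪ Z := hYZ ▸ rfl
    rcases hw with hw | hw
    · exact Or.inl ((KModel.csat_flat α Y).1 hY w hw)
    · exact Or.inr ((KModel.csat_flat β Z).1 hZ w hw)
  · intro h
    rcases h with h | h
    · exact ⟨{w}, ∅, by simp, h, KModel.csat_empty β⟩
    · exact ⟨∅, {w}, by simp, KModel.csat_empty α, h⟩

theorem KModel.csat_singleton_dia {M : KModel} {w : M.W} {α : CForm} :
    M.csat {w} (.dia α) ↔ ∃ u, M.R w u ∧ M.csat {u} α := by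
  constructor
  · rintro ⟨Y, ⟨hsub, hcov⟩, hY⟩
    rcases hcov w rfl with ⟨u, huY, hru⟩
    exact ⟨u, hru, (KModel.csat_flat α Y).1 hY u huY⟩
  · rintro ⟨u, hru, hu⟩
    refine ⟨{u}, ⟨?_, ?_⟩, hu⟩
    · intro x hx; rcases hx with rfl; exact ⟨w, rfl, hru⟩
    · intro x hx; rcases hx with rfl; exact ⟨u, rfl, hru⟩

theorem KModel.img_singleton {M : KModel} {w : M.W} : M.img {w} = {u | M.R w u} := by
  ext u
  constructor
  · rintro ⟨v, hv, hr⟩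
    have : v = w := hv
    subst this
    exact hr
  · intro h
    exact ⟨w, rfl, h⟩

/- ===================== finite list extraction ===================== -/

theorem exists_list_of_finite_subset {Φ : Set MDVForm} (hfin : Φ.Finite) {B : Set CForm} :
    Φ ⊆ cctx B → ∃ l : List CForm, (∀ γ ∈ l, γ ∈ B) ∧ Φ ⊆ {χ | χ ∈ l.map CForm.toMDV} := by
  refine Set.Finite.induction_on
    (motive := fun Φ _ => Φ ⊆ cctx B → ∃ l : List CForm,
      (∀ γ ∈ l, γ ∈ B) ∧ Φ ⊆ {χ | χ ∈ l.map CForm.toMDV}) Φ hfin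
    (fun _ => ⟨[], by simp, Set.empty_subset _⟩)
    (fun {x} {Φ'} hx hΦfin ih hsub => ?_)
  rcases ih (fun y hy => hsub (Set.mem_insert_iff.2 (Or.inr hy))) with ⟨l, hlB, hl⟩
  rcases hsub (Set.mem_insert _ _) with ⟨γ, hγB, rfl⟩
  refine ⟨γ :: l, ?_, ?_⟩
  · intro γ' hγ'
    rcases List.mem_cons.1 hγ' with rfl | hγ'
    · exact hγB
    · exact hlB γ' hγ'
  · intro y hy
    rcases hy with rfl | hy
    · exact List.mem_cons_self
    · exact List.mem_cons_of_mem _ (hl hy)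

/- ===================== canonical model ===================== -/

def canW : Type := {T : Set CForm // MaxConsC T}

def canM (hex : ∃ T : Set CForm, MaxConsC T) : KModel where
  W := canW
  ne := by
    rcases hex with ⟨T, hT⟩
    exact ⟨⟨T, hT⟩⟩
  R := fun T S => ∀ α : CForm, CForm.box α ∈ T.1 → α ∈ S.1
  V := fun p => {T : canW | CForm.var p ∈ T.1}

theorem box_cneg_of_inconsistent {T : Set CForm} (δ : CForm)
    (h : ND (cctx (insert δ {γ : CForm | CForm.box γ ∈ T})) MDVForm.bot) :
    ND (cctx T) (MDVForm.box (MDVForm.cneg δ)) := by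
  rw [cctx_insert] at h
  have h2 : ND (cctx {γ : CForm | CForm.box γ ∈ T}) (MDVForm.cneg δ) := ND.negI δ h
  rcases ND.finite h2 with ⟨Γ₀, hsub, hfin, hd⟩
  obtain ⟨l, hlB, hΓl⟩ := exists_list_of_finite_subset hfin hsub
  refine ND.boxMon (l.map CForm.toMDV) ?_ (hd.weak hΓl)
  intro χ hχ
  rcases List.mem_map.1 hχ with ⟨γ, hγ, rfl⟩
  exact ND.hyp ⟨CForm.box γ, hlB γ hγ, rfl⟩

theorem cons_insert_neg_boxed {T : Set CForm} (hT : MaxConsC T) {α : CForm}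
    (h : CForm.box α ∉ T) :
    ConsistentC (insert (CForm.neg α) {γ : CForm | CForm.box γ ∈ T}) := by
  intro hbot
  have d : ND (cctx T) (MDVForm.box (MDVForm.cneg (CForm.neg α))) :=
    box_cneg_of_inconsistent (CForm.neg α) hbot
  have d2 : ND (cctx T) ((CForm.box α).toMDV) := by
    refine ND.boxMon [(CForm.neg (CForm.neg α)).toMDV] ?_ ?_
    · intro χ hχ
      have : χ = (CForm.neg (CForm.neg α)).toMDV := by simpa using hχ
      subst this
      exact d
    · rw [setOfList_singleton]
      exact ND.dne α (ND.id _)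
  exact h (hT.mem_of_derive d2)

theorem cons_insert_boxed_of_dia {T : Set CForm} (hT : MaxConsC T) {α : CForm}
    (h : CForm.dia α ∈ T) :
    ConsistentC (insert α {γ : CForm | CForm.box γ ∈ T}) := by
  intro hbot
  have d : ND (cctx T) (MDVForm.box (MDVForm.cneg α)) :=
    box_cneg_of_inconsistent α hbot
  have hboxmem : CForm.box (CForm.neg α) ∈ T := hT.mem_of_derive d
  have hdia : ND (cctx T) (MDVForm.dia α.toMDV) := MaxConsC.hyp_of_mem h
  have inner : ND {α.toMDV} (MDVForm.cneg (CForm.neg α)) := by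
    refine ND.negI (CForm.neg α) ?_
    exact ND.negE α (ND.hyp (Set.mem_insert_iff.2 (Or.inr rfl))) (ND.hyp (Set.mem_insert _ _))
  have s1 : ND (cctx T) (MDVForm.dia (MDVForm.cneg (CForm.neg α))) := ND.diaMon hdia inner
  have s2 : ND (cctx T) (MDVForm.cneg (CForm.box (CForm.neg α))) :=
    ND.interDiaBox (CForm.neg α) s1
  exact hT.1 (ND.negE (CForm.box (CForm.neg α)) (MaxConsC.hyp_of_mem hboxmem) s2)

theorem ND.negDiaBox {Γ : Set MDVForm} {α : CForm} (h : ND Γ (MDVForm.cneg (CForm.dia α))) :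
    ND Γ (MDVForm.box (MDVForm.cneg α)) := by
  have hbot : ND (insert ((CForm.neg (CForm.box (CForm.neg α))).toMDV) Γ) MDVForm.bot := by
    have s1 : ND (insert (MDVForm.cneg (CForm.box (CForm.neg α))) Γ)
        (MDVForm.dia (MDVForm.cneg (CForm.neg α))) :=
      ND.interBoxDia (CForm.neg α) (ND.hyp (Set.mem_insert _ _))
    have s2 := ND.diaMon s1 (ND.dne α (ND.id _))
    exact ND.negE (CForm.dia α) s2 (h.weak (Set.subset_insert _ _))
  exact ND.dne (CForm.box (CForm.neg α)) (ND.negI (CForm.neg (CForm.box (CForm.neg α))) hbot)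

/- ===================== truth lemma ===================== -/

theorem truth_lemma (hex : ∃ T : Set CForm, MaxConsC T) :
    ∀ (α : CForm) (T : (canM hex).W), (canM hex).csat {T} α ↔ α ∈ T.1 := by
  intro α
  induction α with
  | var p =>
    intro T
    show {T} ⊆ (canM hex).V p ↔ _
    simp only [Set.singleton_subset_iff]
    rfl
  | bot =>
    intro T
    show ({T} : Set (canM hex).W) = ∅ ↔ _
    constructor
    · intro h; exact absurd h (by simp)
    · intro h; exact absurd h T.2.bot_not_mem
  | neg α ih =>
    intro T
    show (∀ u ∈ ({T} : Set (canM hex).W), ¬ (canM hex).csat {u} α) ↔ _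
    rw [T.2.neg_mem_iff]
    constructor
    · intro h hα; exact h T rfl ((ih T).2 hα)
    · intro h u hu
      have : u = T := hu
      subst this
      exact fun hc => h ((ih u).1 hc)
  | and α β ih1 ih2 =>
    intro T
    show (canM hex).csat {T} α ∧ (canM hex).csat {T} β ↔ _
    rw [T.2.and_mem_iff, ih1 T, ih2 T]
  | tensor α β ih1 ih2 =>
    intro T
    rw [KModel.csat_singleton_tensor, T.2.tensor_mem_iff, ih1 T, ih2 T]
  | box α ih =>
    intro T
    show (canM hex).csat ((canM hex).img {T}) α ↔ _
    rw [KModel.img_singleton, KModel.csat_flat]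
    constructor
    · intro h
      by_contra hbox
      rcases lindenbaum (cons_insert_neg_boxed T.2 hbox) with ⟨S, hSsub, hS⟩
      have hR : (canM hex).R T ⟨S, hS⟩ := by
        intro γ hγ
        exact hSsub (Set.mem_insert_iff.2 (Or.inr hγ))
      have hα : α ∈ S := (ih ⟨S, hS⟩).1 (h _ hR)
      exact hS.not_both hα (hSsub (Set.mem_insert _ _))
    · intro h S hRS
      exact (ih S).2 (hRS α h)
  | dia α ih =>
    intro T
    rw [KModel.csat_singleton_dia]
    constructor
    · rintro ⟨S, hRS, hα⟩
      by_contra hdia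
      have hneg : CForm.neg (CForm.dia α) ∈ T.1 := T.2.neg_mem_iff.2 hdia
      have d : ND (cctx T.1) (MDVForm.box (MDVForm.cneg α)) :=
        ND.negDiaBox (MaxConsC.hyp_of_mem hneg)
      have hboxmem : CForm.box (CForm.neg α) ∈ T.1 := T.2.mem_of_derive d
      have hnα : CForm.neg α ∈ S.1 := hRS (CForm.neg α) hboxmem
      exact S.2.not_both ((ih S).1 hα) hnα
    · intro h
      rcases lindenbaum (cons_insert_boxed_of_dia T.2 h) with ⟨S, hSsub, hS⟩
      refine ⟨⟨S, hS⟩, ?_, ?_⟩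
      · intro γ hγ
        exact hSsub (Set.mem_insert_iff.2 (Or.inr hγ))
      · exact (ih ⟨S, hS⟩).2 (hSsub (Set.mem_insert _ _))
/- ===================== the main completeness argument ===================== -/

theorem entails_of_ND {χ₁ χ₂ : MDVForm} (h : ND {χ₁} χ₂) : MDVEntails χ₁ χ₂ := by
  intro M X hX
  refine ND.sound h M X ?_
  intro γ hγ
  have : γ = χ₁ := hγ
  subst this
  exact hX

theorem MDVEntails.trans {χ₁ χ₂ χ₃ : MDVForm} (h1 : MDVEntails χ₁ χ₂)
    (h2 : MDVEntails χ₂ χ₃) : MDVEntails χ₁ χ₃ :=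
  fun M X hX => h2 M X (h1 M X hX)

theorem core_lemma {α : CForm} {Bs : List CForm} (hBs : Bs ≠ [])
    (h : MDVEntails α.toMDV (bigOr (Bs.map CForm.toMDV))) :
    ∃ β ∈ Bs, ND {α.toMDV} β.toMDV := by
  by_contra hc
  push_neg at hc
  have hcons : ∀ β ∈ Bs, ConsistentC (insert (CForm.neg β) {α}) := by
    intro β hβ hbot
    rw [cctx_insert] at hbot
    have hsingle : cctx {α} = {α.toMDV} := by simp [cctx]
    rw [hsingle] at hbot
    exact hc β hβ (ND.dne β (ND.negI (CForm.neg β) hbot))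
  choose f hf1 hf2 using fun β (hβ : β ∈ Bs) => lindenbaum (hcons β hβ)
  obtain ⟨β₀, hβ₀⟩ := List.exists_mem_of_ne_nil Bs hBs
  have hex : ∃ T : Set CForm, MaxConsC T := ⟨f β₀ hβ₀, hf2 β₀ hβ₀⟩
  set M := canM hex with hM
  set X : Set M.W := {S | ∃ β, ∃ hβ : β ∈ Bs, S = ⟨f β hβ, hf2 β hβ⟩} with hX
  have hXα : M.sat X α.toMDV := by
    rw [KModel.sat_toMDV]
    refine (KModel.csat_flat α X).2 fun S hS => ?_
    rcases hS with ⟨β, hβ, rfl⟩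
    refine (truth_lemma hex α _).2 ?_
    exact hf1 β hβ (Set.mem_insert_iff.2 (Or.inr rfl))
  have hsatOr := h M X hXα
  rw [KModel.bigOr_sat _ (by simp [hBs])] at hsatOr
  rcases hsatOr with ⟨χ, hχ, hsat⟩
  rcases List.mem_map.1 hχ with ⟨β, hβ, rfl⟩
  rw [KModel.sat_toMDV] at hsat
  have hmem : (⟨f β hβ, hf2 β hβ⟩ : M.W) ∈ X := ⟨β, hβ, rfl⟩
  have hβT : β ∈ f β hβ :=
    (truth_lemma hex β _).1 ((KModel.csat_flat β X).1 hsat _ hmem)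
  have hnβT : CForm.neg β ∈ f β hβ := hf1 β hβ (Set.mem_insert _ _)
  exact (hf2 β hβ).not_both hβT hnβT
/-- STATEMENT 11: Completeness (and soundness) of the natural deduction system of
MD∨: φ⊨ψ iff φ⊢ψ. -/
theorem mdv_completeness (φ ψ : MDVForm) : MDVEntails φ ψ ↔ ND {φ} ψ := by
  constructor
  · intro h
    have e1 := NF_equiv φ
    have e2 := NF_equiv ψ
    have hAB : ND {bigOr ((NF φ).map CForm.toMDV)} (bigOr ((NF ψ).map CForm.toMDV)) := by
      refine ND.bigOr_mono (by simp [NF_ne_nil φ]) ?_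
      intro χ hχ
      rcases List.mem_map.1 hχ with ⟨a, ha, rfl⟩
      have hent : MDVEntails a.toMDV (bigOr ((NF ψ).map CForm.toMDV)) :=
        ((entails_of_ND (ND.bigOr_of_mem (List.mem_map.2 ⟨a, ha, rfl⟩))).trans
          (entails_of_ND e1.2)).trans (h.trans (entails_of_ND e2.1))
      rcases core_lemma (NF_ne_nil ψ) hent with ⟨b, hb, hd⟩
      exact ND.bigOrI (List.mem_map.2 ⟨b, hb, rfl⟩) hd
    exact e1.1.seq (hAB.seq e2.2)
  · intro h
    exact entails_of_ND h
end
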